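/- arXiv:1405.1468 — 8 statements merged into one kernel-verified Lean document; each statement's English description precedes it below -/
import Mathlib

section
/- Let (X,μ) be a probability space and let f : X → [0,∞) be measurable with ∫ f dμ = 1 and with f·log f μ-integrable; set D := ∫ f log f dμ and let ν := f·μ be the corresponding probability measure with density f. Then for every C > 0 one has ν ≪_{e^C, (D+e^{−1})/C} μ; that is, ν(A) ≤ e^C · μ(A) + (D+e^{−1})/C for every measurable set A ⊆ X. -/
open MeasureTheory Real

/-!
Split at the level `e^C`: where `f ≤ e^C` the density contributes at most `e^C μ(A)`, and where
`f > e^C` one has `log f > C`, so `f ≤ f log f / C`. Since `f log f ≥ -e⁻¹`, both cases give the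
pointwise bound `f ≤ e^C + (f log f + e⁻¹)/C` with a nonnegative second summand, whose integral
over the probability space `μ` is `(D + e⁻¹)/C`.
-/

theorem Real.neg_exp_neg_one_le_mul_log {x : ℝ} (hx : 0 ≤ x) : -exp (-1) ≤ x * log x := by
  rcases hx.eq_or_lt with rfl | hx
  · simp [(exp_pos _).le]
  · have := mul_exp_neg_le_exp_neg_one (-log x)
    rw [neg_neg, exp_log hx] at this
    linarith

theorem Real.le_exp_add_mul_log_add_exp_neg_one_div {x C : ℝ} (hx : 0 ≤ x) (hC : 0 < C) :
    x ≤ exp C + (x * log x + exp (-1)) / C := by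
  rcases le_or_gt x (exp C) with hxC | hxC
  · have hrest : 0 ≤ (x * log x + exp (-1)) / C :=
      div_nonneg (by linarith [neg_exp_neg_one_le_mul_log hx]) hC.le
    linarith
  · have hlog : C < log x := (lt_log_iff_exp_lt ((exp_pos C).trans hxC)).2 hxC
    have hx_le : x ≤ x * log x / C := by
      rw [le_div_iff₀ hC]
      exact mul_le_mul_of_nonneg_left hlog.le hx
    have hshift : x * log x / C ≤ (x * log x + exp (-1)) / C := by
      gcongr
      linarith [exp_pos (-1)]
    linarith [exp_pos C]

theorem MeasureTheory.withDensity_ofReal_apply_le_of_le_add {X : Type*} [MeasurableSpace X]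
    {μ : Measure X} {f g : X → ℝ} {a : ℝ} (hg : Integrable g μ) (hg0 : 0 ≤ᵐ[μ] g)
    (hfg : ∀ x, f x ≤ a + g x) {A : Set X} (hA : MeasurableSet A) :
    μ.withDensity (fun x => ENNReal.ofReal (f x)) A
      ≤ ENNReal.ofReal a * μ A + ENNReal.ofReal (∫ x, g x ∂μ) := by
  calc μ.withDensity (fun x => ENNReal.ofReal (f x)) A
      = ∫⁻ x in A, ENNReal.ofReal (f x) ∂μ := withDensity_apply _ hA
    _ ≤ ∫⁻ x in A, ENNReal.ofReal a + ENNReal.ofReal (g x) ∂μ :=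
      lintegral_mono fun x => (ENNReal.ofReal_le_ofReal (hfg x)).trans ENNReal.ofReal_add_le
    _ = ENNReal.ofReal a * μ A + ∫⁻ x in A, ENNReal.ofReal (g x) ∂μ := by
      rw [lintegral_add_left measurable_const, setLIntegral_const]
    _ ≤ ENNReal.ofReal a * μ A + ∫⁻ x, ENNReal.ofReal (g x) ∂μ := by
      gcongr
      exact Measure.restrict_le_self
    _ = ENNReal.ofReal a * μ A + ENNReal.ofReal (∫ x, g x ∂μ) := by
      rw [ofReal_integral_eq_lintegral_ofReal hg hg0]

theorem uniform_integrability_from_relative_entropy_general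
    {X : Type*} [MeasurableSpace X] (μ : Measure X) [IsProbabilityMeasure μ]
    (f : X → ℝ) (hf0 : ∀ x, 0 ≤ f x)
    (hint : Integrable (fun x => f x * Real.log (f x)) μ)
    (D : ℝ) (hD : D = ∫ x, f x * Real.log (f x) ∂μ)
    (ν : Measure X) (hν : ν = μ.withDensity (fun x => ENNReal.ofReal (f x)))
    (C : ℝ) (hC : 0 < C) :
    ∀ A : Set X, MeasurableSet A →
      ν A ≤ ENNReal.ofReal (Real.exp C) * μ A
          + ENNReal.ofReal ((D + Real.exp (-1)) / C) := by
  intro A hA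
  have hg : Integrable (fun x => (f x * log (f x) + exp (-1)) / C) μ :=
    (hint.add (integrable_const _)).div_const C
  have hg0 : 0 ≤ᵐ[μ] fun x => (f x * log (f x) + exp (-1)) / C :=
    ae_of_all _ fun x => div_nonneg (by linarith [neg_exp_neg_one_le_mul_log (hf0 x)]) hC.le
  have hintegral : ∫ x, (f x * log (f x) + exp (-1)) / C ∂μ = (D + exp (-1)) / C := by
    rw [integral_div, integral_add hint (integrable_const _), integral_const, hD]
    simp
  rw [hν, ← hintegral]
  exact withDensity_ofReal_apply_le_of_le_add hg hg0
    (fun x => le_exp_add_mul_log_add_exp_neg_one_div (hf0 x) hC) hA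

/-- **Uniform integrability from a relative entropy bound.**
If `ν = f·μ` is a probability measure with density `f` with respect to the probability
measure `μ`, with `f·log f` integrable and `D := ∫ f log f dμ`, then for every `C > 0` one
has `ν(A) ≤ e^C · μ(A) + (D + e^{−1})/C` for every measurable `A`. -/
theorem uniform_integrability_from_relative_entropy
    {X : Type*} [MeasurableSpace X] (μ : Measure X) [IsProbabilityMeasure μ]
    (f : X → ℝ) (hf : Measurable f) (hf0 : ∀ x, 0 ≤ f x)
    (hf1 : ∫ x, f x ∂μ = 1)
    (hint : Integrable (fun x => f x * Real.log (f x)) μ)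
    (D : ℝ) (hD : D = ∫ x, f x * Real.log (f x) ∂μ)
    (ν : Measure X) (hν : ν = μ.withDensity (fun x => ENNReal.ofReal (f x)))
    (C : ℝ) (hC : 0 < C) :
    ∀ A : Set X, MeasurableSet A →
      ν A ≤ ENNReal.ofReal (Real.exp C) * μ A
          + ENNReal.ofReal ((D + Real.exp (-1)) / C) :=
  uniform_integrability_from_relative_entropy_general μ f hf0 hint D hD ν hν C hC
end

section
/- Let (X,μ) be a probability space, let s, t, r be measurable maps from X into finite sets, and let A ⊆ X be measurable with μ(A) > 0. Let μ_{|A} denote the conditioned probability measure μ(A)^{-1}·μ(A ∩ ·). Then μ(A)·I_{μ_{|A}}(s;t|r) ≤ log 2 + I_μ(s;t|r). -/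
/-!
Let `e` be the indicator of `A`. Conditioning additionally on `e` splits the conditional mutual
information into the two halves `μ(A) · I_{μ|A}(s;t|r) + μ(Aᶜ) · I_{μ|Aᶜ}(s;t|r)`, both
nonnegative, so `I_μ(s;t|r,e)` dominates the left-hand side. On the other hand, adjoining `e` to
the condition raises the conditional mutual information by at most `H(e) ≤ log 2`. Both steps rest
on the submodularity of entropy, `H(s,t,r) + H(r) ≤ H(s,r) + H(t,r)`, which is Gibbs' inequality
for the joint law of `(s,t,r)` against the weights `P(s,r) P(t,r) / P(r)`.
-/

open MeasureTheory

/-- Shannon entropy of a finite-valued map, with natural logarithm. -/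
noncomputable def finEntropy {X S : Type*} [MeasurableSpace X] [Fintype S]
    (μ : Measure X) (s : X → S) : ℝ :=
  ∑ i : S, Real.negMulLog ((μ (s ⁻¹' {i})).toReal)

/-- Conditional mutual information `I_μ(s;t|r)` of finite-valued maps. -/
noncomputable def finCondMutualInfo {X S T R : Type*} [MeasurableSpace X]
    [Fintype S] [Fintype T] [Fintype R]
    (μ : Measure X) (s : X → S) (t : X → T) (r : X → R) : ℝ :=
  finEntropy μ (fun x => (s x, r x)) + finEntropy μ (fun x => (t x, r x))
    - finEntropy μ (fun x => (s x, t x, r x)) - finEntropy μ r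

open ProbabilityTheory Real Finset
open scoped ENNReal

namespace Real

lemma negMulLog_add_le {x y : ℝ} (hx : 0 ≤ x) (hy : 0 ≤ y) :
    negMulLog (x + y) ≤ negMulLog x + negMulLog y := by
  rcases hx.eq_or_lt with rfl | hx
  · simp
  rcases hy.eq_or_lt with rfl | hy
  · simp
  have hlogx : log x ≤ log (x + y) := log_le_log hx (by linarith)
  have hlogy : log y ≤ log (x + y) := log_le_log hy (by linarith)
  simp only [negMulLog, neg_mul, add_mul]
  nlinarith

lemma negMulLog_sum_le {ι : Type*} (s : Finset ι) {x : ι → ℝ} (hx : ∀ i ∈ s, 0 ≤ x i) :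
    negMulLog (∑ i ∈ s, x i) ≤ ∑ i ∈ s, negMulLog (x i) :=
  Finset.le_sum_of_subadditive_on_pred _ (0 ≤ ·) (by simp) (fun _ _ => negMulLog_add_le)
    (fun _ _ => add_nonneg) x hx

lemma mul_log_le_mul_log_add_sub {a b : ℝ} (ha : 0 ≤ a) (hb : 0 < b) :
    a * log b ≤ a * log a + b - a := by
  rcases ha.eq_or_lt with rfl | ha
  · simpa using hb.le
  have h := mul_le_mul_of_nonneg_left (log_le_sub_one_of_pos (div_pos hb ha)) ha.le
  rw [log_div hb.ne' ha.ne', mul_sub, mul_sub, mul_div_cancel₀ _ ha.ne', mul_one] at h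
  linarith

end Real

section

variable {X S T R : Type*} [MeasurableSpace X] {ν : Measure X}
  [Fintype S] [MeasurableSpace S] [MeasurableSingletonClass S]
  [Fintype T] [MeasurableSpace T] [MeasurableSingletonClass T]
  [Fintype R] [MeasurableSpace R] [MeasurableSingletonClass R]

lemma finEntropy_eq_sum_measureReal {κ : Type*} [Fintype κ] (f : X → κ) :
    finEntropy ν f = ∑ i, negMulLog (ν.real (f ⁻¹' {i})) := rfl

lemma measurable_boolIndicator {A : Set X} (hA : MeasurableSet A) : Measurable A.boolIndicator :=
  measurable_to_countable' fun
    | true => by rwa [Set.preimage_boolIndicator_true]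
    | false => by rwa [Set.preimage_boolIndicator_false, MeasurableSet.compl_iff]

lemma finEntropy_restrict_add_restrict_compl (A : Set X) {f : X → S}
    (hf : Measurable f) :
    finEntropy (ν.restrict A) f + finEntropy (ν.restrict Aᶜ) f
      = finEntropy ν (fun x => (f x, A.boolIndicator x)) := by
  simp only [finEntropy_eq_sum_measureReal, Fintype.sum_prod_type, Fintype.sum_bool,
    ← Finset.sum_add_distrib, measureReal_restrict_apply (hf (measurableSet_singleton _))]
  refine Finset.sum_congr rfl fun k _ => ?_
  congr 3 <;> ext x <;>
    simp only [Set.mem_inter_iff, Set.mem_compl_iff, Set.mem_preimage, Set.mem_singleton_iff,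
      Prod.mk.injEq, ← Set.mem_iff_boolIndicator, ← Set.notMem_iff_boolIndicator]

variable [IsFiniteMeasure ν]

lemma sum_measureReal_preimage_singleton_univ {f : X → S} (hf : Measurable f) :
    ∑ i, ν.real (f ⁻¹' {i}) = ν.real Set.univ := by
  rw [sum_measureReal_preimage_singleton _ fun i _ => hf (measurableSet_singleton i)]
  simp

lemma measureReal_preimage_comp {κ : Type*} [DecidableEq κ] {f : X → S} (hf : Measurable f)
    (g : S → κ) (k : κ) :
    ν.real ((g ∘ f) ⁻¹' {k}) = ∑ i with g i = k, ν.real (f ⁻¹' {i}) := by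
  rw [sum_measureReal_preimage_singleton _ fun i _ => hf (measurableSet_singleton i)]
  congr 1
  ext x
  simp

lemma sum_measureReal_preimage_mul {κ : Type*} [Fintype κ] {f : X → S} (hf : Measurable f)
    (g : S → κ) (c : κ → ℝ) :
    ∑ i, ν.real (f ⁻¹' {i}) * c (g i) = ∑ k, ν.real ((g ∘ f) ⁻¹' {k}) * c k := by
  classical
  simp only [measureReal_preimage_comp hf, Finset.sum_mul]
  rw [← Finset.sum_fiberwise univ g]
  refine Finset.sum_congr rfl fun k _ => Finset.sum_congr rfl fun i hi => ?_
  rw [(Finset.mem_filter.1 hi).2]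

lemma sum_measureReal_preimage_prodMk {f : X → S} {h : X → R} (hf : Measurable f)
    (hh : Measurable h) (c : R) :
    ∑ a, ν.real ((fun x => (f x, h x)) ⁻¹' {(a, c)}) = ν.real (h ⁻¹' {c}) := by
  classical
  rw [show h = Prod.snd ∘ fun x => (f x, h x) from rfl, measureReal_preimage_comp (hf.prodMk hh),
    Finset.sum_filter, Fintype.sum_prod_type]
  simp

lemma sum_measureReal_prodMk_mul_div {f : X → S} {g : X → T} {h : X → R}
    (hf : Measurable f) (hg : Measurable g) (hh : Measurable h) :
    ∑ v : S × T × R, ν.real ((fun x => (f x, h x)) ⁻¹' {(v.1, v.2.2)})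
      * ν.real ((fun x => (g x, h x)) ⁻¹' {(v.2.1, v.2.2)}) / ν.real (h ⁻¹' {v.2.2})
      = ν.real Set.univ := by
  calc _ = ∑ c, (∑ a, ν.real ((fun x => (f x, h x)) ⁻¹' {(a, c)}))
          * (∑ b, ν.real ((fun x => (g x, h x)) ⁻¹' {(b, c)})) / ν.real (h ⁻¹' {c}) := by
        simp only [Fintype.sum_prod_type, Finset.sum_mul_sum, Finset.sum_div]
        exact Finset.sum_comm_cycle
    _ = ∑ c, ν.real (h ⁻¹' {c}) := by
        simp only [sum_measureReal_preimage_prodMk hf hh, sum_measureReal_preimage_prodMk hg hh,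
          mul_self_div_self]
    _ = ν.real Set.univ := sum_measureReal_preimage_singleton_univ hh

lemma measureReal_preimage_singleton_le_comp {ι κ : Type*} (f : X → ι) (g : ι → κ)
    (i : ι) :
    ν.real (f ⁻¹' {i}) ≤ ν.real ((g ∘ f) ⁻¹' {g i}) :=
  measureReal_mono fun x (hx : f x = i) => by simp [hx]

lemma finEntropy_comp_le {κ : Type*} [Fintype κ] {f : X → S} (hf : Measurable f)
    (g : S → κ) :
    finEntropy ν (g ∘ f) ≤ finEntropy ν f := by
  classical
  simp only [finEntropy_eq_sum_measureReal, measureReal_preimage_comp hf]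
  rw [← Finset.sum_fiberwise univ g]
  exact Finset.sum_le_sum fun k _ => negMulLog_sum_le _ fun i _ => measureReal_nonneg

lemma finEntropy_congr {f : X → S} {g : X → T} (hf : Measurable f) (hg : Measurable g)
    (u : S → T) (v : T → S) (hgf : g = u ∘ f) (hfg : f = v ∘ g) :
    finEntropy ν f = finEntropy ν g := by
  apply le_antisymm
  · conv_lhs => rw [hfg]
    exact finEntropy_comp_le hg v
  · conv_lhs => rw [hgf]
    exact finEntropy_comp_le hf u

lemma finEntropy_comp_eq_neg_sum {κ : Type*} [Fintype κ] {f : X → S} (hf : Measurable f)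
    (g : S → κ) :
    finEntropy ν (g ∘ f)
      = -∑ i, ν.real (f ⁻¹' {i}) * log (ν.real ((g ∘ f) ⁻¹' {g i})) := by
  rw [sum_measureReal_preimage_mul hf g fun k => log (ν.real ((g ∘ f) ⁻¹' {k})),
    finEntropy_eq_sum_measureReal, ← Finset.sum_neg_distrib]
  simp only [negMulLog, neg_mul]

theorem finEntropy_submodular {f : X → S} {g : X → T} {h : X → R}
    (hf : Measurable f) (hg : Measurable g) (hh : Measurable h) :
    finEntropy ν (fun x => (f x, g x, h x)) + finEntropy ν h
      ≤ finEntropy ν (fun x => (f x, h x)) + finEntropy ν (fun x => (g x, h x)) := by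
  set φ : X → S × T × R := fun x => (f x, g x, h x)
  have hφ : Measurable φ := hf.prodMk (hg.prodMk hh)
  set w : S × T × R → ℝ := fun v => ν.real (φ ⁻¹' {v})
  set P : S × R → ℝ := fun p => ν.real ((fun x => (f x, h x)) ⁻¹' {p})
  set Q : T × R → ℝ := fun p => ν.real ((fun x => (g x, h x)) ⁻¹' {p})
  set M : R → ℝ := fun c => ν.real (h ⁻¹' {c})
  have hH_fgh : finEntropy ν φ = -∑ v, w v * log (w v) := finEntropy_comp_eq_neg_sum hφ id
  have hH_fh : finEntropy ν (fun x => (f x, h x)) = -∑ v, w v * log (P (v.1, v.2.2)) :=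
    finEntropy_comp_eq_neg_sum hφ fun v => (v.1, v.2.2)
  have hH_gh : finEntropy ν (fun x => (g x, h x)) = -∑ v, w v * log (Q (v.2.1, v.2.2)) :=
    finEntropy_comp_eq_neg_sum hφ fun v => (v.2.1, v.2.2)
  have hH_h : finEntropy ν h = -∑ v, w v * log (M v.2.2) :=
    finEntropy_comp_eq_neg_sum hφ fun v => v.2.2
  -- Gibbs' inequality against the weights `P Q / M`, which have the same total mass as `w`
  have hpoint : ∀ v, w v * (log (P (v.1, v.2.2)) + log (Q (v.2.1, v.2.2)) - log (M v.2.2))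
      ≤ w v * log (w v) + P (v.1, v.2.2) * Q (v.2.1, v.2.2) / M v.2.2 - w v := by
    intro v
    have hw0 : 0 ≤ w v := measureReal_nonneg
    rcases hw0.eq_or_lt with hw | hw
    · rw [← hw]
      simp only [zero_mul, sub_zero, zero_add]
      positivity
    have hP : 0 < P (v.1, v.2.2) :=
      hw.trans_le (measureReal_preimage_singleton_le_comp φ (fun v => (v.1, v.2.2)) v)
    have hQ : 0 < Q (v.2.1, v.2.2) :=
      hw.trans_le (measureReal_preimage_singleton_le_comp φ (fun v => (v.2.1, v.2.2)) v)
    have hM : 0 < M v.2.2 := hw.trans_le (measureReal_preimage_singleton_le_comp φ (·.2.2) v)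
    rw [← log_mul hP.ne' hQ.ne', ← log_div (mul_pos hP hQ).ne' hM.ne']
    exact mul_log_le_mul_log_add_sub hw.le (div_pos (mul_pos hP hQ) hM)
  have hmass : ∑ v : S × T × R, P (v.1, v.2.2) * Q (v.2.1, v.2.2) / M v.2.2 = ∑ v, w v :=
    (sum_measureReal_prodMk_mul_div hf hg hh).trans
      (sum_measureReal_preimage_singleton_univ hφ).symm
  have hsum := Finset.sum_le_sum (s := univ) fun v _ => hpoint v
  simp only [Finset.sum_sub_distrib, Finset.sum_add_distrib, mul_add, mul_sub, hmass] at hsum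
  rw [hH_fgh, hH_fh, hH_gh, hH_h]
  linarith

lemma finCondMutualInfo_nonneg {f : X → S} {g : X → T} {h : X → R}
    (hf : Measurable f) (hg : Measurable g) (hh : Measurable h) :
    0 ≤ finCondMutualInfo ν f g h := by
  have := finEntropy_submodular (ν := ν) hf hg hh
  rw [finCondMutualInfo]
  linarith

lemma finEntropy_prod_le_add [IsProbabilityMeasure ν] {f : X → S} {g : X → T}
    (hf : Measurable f) (hg : Measurable g) :
    finEntropy ν (fun x => (f x, g x)) ≤ finEntropy ν f + finEntropy ν g := by
  have h := finEntropy_submodular (ν := ν) hf hg (measurable_const : Measurable fun _ : X => ())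
  have hfg : finEntropy ν (fun x => (f x, g x, ())) = finEntropy ν (fun x => (f x, g x)) :=
    finEntropy_congr (by fun_prop) (by fun_prop) (fun p => (p.1, p.2.1)) (fun p => (p.1, p.2, ()))
      rfl rfl
  have hf' : finEntropy ν (fun x => (f x, ())) = finEntropy ν f :=
    finEntropy_congr (by fun_prop) hf Prod.fst (·, ()) rfl rfl
  have hg' : finEntropy ν (fun x => (g x, ())) = finEntropy ν g :=
    finEntropy_congr (by fun_prop) hg Prod.fst (·, ()) rfl rfl
  have hunit : finEntropy ν (fun _ : X => ()) = 0 := by simp [finEntropy_eq_sum_measureReal]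
  rw [hfg, hf', hg', hunit] at h
  linarith

lemma finEntropy_le_log_two [IsProbabilityMeasure ν] {e : X → Bool} (he : Measurable e) :
    finEntropy ν e ≤ log 2 := by
  have hsum := sum_measureReal_preimage_singleton_univ (ν := ν) he
  rw [Fintype.sum_bool, probReal_univ] at hsum
  rw [finEntropy_eq_sum_measureReal, Fintype.sum_bool, eq_sub_of_add_eq' hsum,
    ← binEntropy_eq_negMulLog_add_negMulLog_one_sub]
  exact binEntropy_le_log_two

lemma finCondMutualInfo_prod_le {U : Type*} [Fintype U] [MeasurableSpace U]
    [MeasurableSingletonClass U] [IsProbabilityMeasure ν] {f : X → S} {g : X → T} {h : X → R}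
    {e : X → U} (hf : Measurable f) (hg : Measurable g) (hh : Measurable h) (he : Measurable e) :
    finCondMutualInfo ν f g (fun x => (h x, e x))
      ≤ finEntropy ν e + finCondMutualInfo ν f g h := by
  have hsub : finEntropy ν (fun x => (f x, h x, e x)) + finEntropy ν h
      ≤ finEntropy ν (fun x => (f x, h x)) + finEntropy ν (fun x => (h x, e x)) := by
    have e₁ : finEntropy ν (fun x => (f x, e x, h x))
        = finEntropy ν (fun x => (f x, h x, e x)) :=
      finEntropy_congr (by fun_prop) (by fun_prop) (fun p => (p.1, p.2.2, p.2.1))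
        (fun p => (p.1, p.2.2, p.2.1)) rfl rfl
    have e₂ : finEntropy ν (fun x => (e x, h x)) = finEntropy ν (fun x => (h x, e x)) :=
      finEntropy_congr (by fun_prop) (by fun_prop) Prod.swap Prod.swap rfl rfl
    have := finEntropy_submodular (ν := ν) hf he hh
    rwa [e₁, e₂] at this
  have hmono : finEntropy ν (fun x => (f x, g x, h x))
      ≤ finEntropy ν (fun x => (f x, g x, h x, e x)) :=
    finEntropy_comp_le (f := fun x => (f x, g x, h x, e x)) (by fun_prop)
      fun p => (p.1, p.2.1, p.2.2.1)
  have hadd : finEntropy ν (fun x => (g x, h x, e x))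
      ≤ finEntropy ν (fun x => (g x, h x)) + finEntropy ν e := by
    have e₃ : finEntropy ν (fun x => ((g x, h x), e x))
        = finEntropy ν (fun x => (g x, h x, e x)) :=
      finEntropy_congr (by fun_prop) (by fun_prop) (fun p => (p.1.1, p.1.2, p.2))
        (fun p => ((p.1, p.2.1), p.2.2)) rfl rfl
    have := finEntropy_prod_le_add (ν := ν) (hg.prodMk hh) he
    rwa [e₃] at this
  rw [finCondMutualInfo, finCondMutualInfo]
  linarith

lemma finEntropy_smul (c : ℝ≥0∞) {f : X → S} (hf : Measurable f) :
    finEntropy (c • ν) f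
      = c.toReal * finEntropy ν f + negMulLog c.toReal * ν.real Set.univ := by
  simp only [finEntropy_eq_sum_measureReal, measureReal_ennreal_smul_apply, negMulLog_mul,
    Finset.sum_add_distrib, ← Finset.mul_sum, ← Finset.sum_mul,
    sum_measureReal_preimage_singleton_univ hf]
  ring

lemma finCondMutualInfo_smul (c : ℝ≥0∞) {f : X → S} {g : X → T} {h : X → R}
    (hf : Measurable f) (hg : Measurable g) (hh : Measurable h) :
    finCondMutualInfo (c • ν) f g h = c.toReal * finCondMutualInfo ν f g h := by
  rw [finCondMutualInfo, finCondMutualInfo, finEntropy_smul c (hf.prodMk hh),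
    finEntropy_smul c (hg.prodMk hh), finEntropy_smul c (hf.prodMk (hg.prodMk hh)),
    finEntropy_smul c hh]
  ring

lemma toReal_mul_finCondMutualInfo_cond {f : X → S} {g : X → T} {h : X → R}
    (hf : Measurable f) (hg : Measurable g) (hh : Measurable h) (A : Set X) :
    (ν A).toReal * finCondMutualInfo ν[|A] f g h = finCondMutualInfo (ν.restrict A) f g h := by
  rcases eq_or_ne (ν A) 0 with hA | hA
  · simp [hA, Measure.restrict_eq_zero.2 hA, finCondMutualInfo, finEntropy]
  rw [ProbabilityTheory.cond, finCondMutualInfo_smul _ hf hg hh, ENNReal.toReal_inv,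
    mul_inv_cancel_left₀ (ENNReal.toReal_ne_zero.2 ⟨hA, measure_ne_top ν A⟩)]

lemma finCondMutualInfo_restrict_add_restrict_compl {f : X → S} {g : X → T} {h : X → R}
    {A : Set X} (hf : Measurable f) (hg : Measurable g) (hh : Measurable h)
    (hA : MeasurableSet A) :
    finCondMutualInfo (ν.restrict A) f g h + finCondMutualInfo (ν.restrict Aᶜ) f g h
      = finCondMutualInfo ν f g (fun x => (h x, A.boolIndicator x)) := by
  set e := A.boolIndicator
  have he : Measurable e := measurable_boolIndicator hA
  have split_fh := finEntropy_restrict_add_restrict_compl (ν := ν) A (hf.prodMk hh)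
  have split_gh := finEntropy_restrict_add_restrict_compl (ν := ν) A (hg.prodMk hh)
  have split_fgh := finEntropy_restrict_add_restrict_compl (ν := ν) A (hf.prodMk (hg.prodMk hh))
  have split_h := finEntropy_restrict_add_restrict_compl (ν := ν) A hh
  have e₁ : finEntropy ν (fun x => ((f x, h x), e x))
      = finEntropy ν (fun x => (f x, h x, e x)) :=
    finEntropy_congr (by fun_prop) (by fun_prop) (fun p => (p.1.1, p.1.2, p.2))
      (fun p => ((p.1, p.2.1), p.2.2)) rfl rfl
  have e₂ : finEntropy ν (fun x => ((g x, h x), e x))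
      = finEntropy ν (fun x => (g x, h x, e x)) :=
    finEntropy_congr (by fun_prop) (by fun_prop) (fun p => (p.1.1, p.1.2, p.2))
      (fun p => ((p.1, p.2.1), p.2.2)) rfl rfl
  have e₃ : finEntropy ν (fun x => ((f x, g x, h x), e x))
      = finEntropy ν (fun x => (f x, g x, h x, e x)) :=
    finEntropy_congr (by fun_prop) (by fun_prop) (fun p => (p.1.1, p.1.2.1, p.1.2.2, p.2))
      (fun p => ((p.1, p.2.1, p.2.2.1), p.2.2.2)) rfl rfl
  rw [e₁] at split_fh
  rw [e₂] at split_gh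
  rw [e₃] at split_fgh
  simp only [finCondMutualInfo]
  linarith

end

theorem cond_mutualInfo_on_subset_general
    {X S T R : Type*} [MeasurableSpace X]
    [Fintype S] [MeasurableSpace S] [MeasurableSingletonClass S]
    [Fintype T] [MeasurableSpace T] [MeasurableSingletonClass T]
    [Fintype R] [MeasurableSpace R] [MeasurableSingletonClass R]
    (μ : Measure X) [IsProbabilityMeasure μ]
    (s : X → S) (t : X → T) (r : X → R)
    (hs : Measurable s) (ht : Measurable t) (hr : Measurable r)
    (A : Set X) (hA : MeasurableSet A) :
    (μ A).toReal * finCondMutualInfo (ProbabilityTheory.cond μ A) s t r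
      ≤ Real.log 2 + finCondMutualInfo μ s t r := by
  have hbA : Measurable A.boolIndicator := measurable_boolIndicator hA
  calc (μ A).toReal * finCondMutualInfo (ProbabilityTheory.cond μ A) s t r
      = finCondMutualInfo (μ.restrict A) s t r := toReal_mul_finCondMutualInfo_cond hs ht hr A
    _ ≤ finCondMutualInfo (μ.restrict A) s t r + finCondMutualInfo (μ.restrict Aᶜ) s t r :=
      le_add_of_nonneg_right (finCondMutualInfo_nonneg hs ht hr)
    _ = finCondMutualInfo μ s t (fun x => (r x, A.boolIndicator x)) :=
      finCondMutualInfo_restrict_add_restrict_compl hs ht hr hA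
    _ ≤ finEntropy μ A.boolIndicator + finCondMutualInfo μ s t r :=
      finCondMutualInfo_prod_le hs ht hr hbA
    _ ≤ log 2 + finCondMutualInfo μ s t r := by
      gcongr
      exact finEntropy_le_log_two hbA

/-- **Conditioning mutual information on a subset.** -/
theorem cond_mutualInfo_on_subset
    {X S T R : Type*} [MeasurableSpace X]
    [Fintype S] [MeasurableSpace S] [MeasurableSingletonClass S]
    [Fintype T] [MeasurableSpace T] [MeasurableSingletonClass T]
    [Fintype R] [MeasurableSpace R] [MeasurableSingletonClass R]
    (μ : Measure X) [IsProbabilityMeasure μ]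
    (s : X → S) (t : X → T) (r : X → R)
    (hs : Measurable s) (ht : Measurable t) (hr : Measurable r)
    (A : Set X) (hA : MeasurableSet A) (hApos : 0 < μ A) :
    (μ A).toReal * finCondMutualInfo (ProbabilityTheory.cond μ A) s t r
      ≤ Real.log 2 + finCondMutualInfo μ s t r :=
  cond_mutualInfo_on_subset_general μ s t r hs ht hr A hA
end

section
/- Suppose (X,μ) and (Z,ν) are standard Borel probability spaces, M > 0, ε ≥ 0, and z ↦ μ_z is a family of finite measures on X such that: z ↦ μ_z(A) is measurable for every measurable A ⊆ X; sup_z μ_z(X) < ∞; μ(A) = ∫_Z μ_z(A) ν(dz) for every measurable A; and μ_z(A) ≤ M·μ(A) + ε for every z ∈ Z and every measurable A. Suppose in addition that for each z ∈ Z, Y_z ⊆ X is a measurable set with μ_z(Y_z) = 1. Then for every α < 1 − ε there is a finite subset S ⊆ Z with |S| ≤ M/(1 − α − ε) and μ(⋃_{z∈S} Y_z) > α. -/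
/-!
Greedy algorithm. Let `U` be the union of the sets `Y_z` chosen so far, and suppose `μ(U) ≤ α`.
Averaging `μ(U) = ∫ μ_z(U) dν(z)` gives some `z` with `μ_z(U) ≤ μ(U)`, hence
`1 = μ_z(Y_z) ≤ μ_z(Y_z \ U) + μ(U) ≤ M μ(Y_z \ U) + ε + α`, so adding `Y_z` increases `μ(U)`
by at least `δ = (1 - α - ε) / M`. After `⌊α / δ⌋ + 1 ≤ M / (1 - α - ε)` steps `μ(U)` exceeds
`α`; the last inequality uses `M ≥ 1 - ε`, which is the same estimate for `U = ∅`.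
-/

open MeasureTheory
open scoped ENNReal

section Greedy

variable {ι : Type*} [DecidableEq ι] (f : Finset ι → ℝ) {α δ : ℝ}

theorem exists_card_le_and_lt_or_add_mul_le
    (hf : ∀ S, f S ≤ α → ∃ i, f S + δ ≤ f (insert i S)) (n : ℕ) :
    ∃ S : Finset ι, S.card ≤ n ∧ (α < f S ∨ f ∅ + n * δ ≤ f S) := by
  induction n with
  | zero => exact ⟨∅, le_rfl, Or.inr (by simp)⟩
  | succ n ih =>
    obtain ⟨S, hS, hlt | hle⟩ := ih
    · exact ⟨S, hS.trans n.le_succ, Or.inl hlt⟩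
    by_cases hα : α < f S
    · exact ⟨S, hS.trans n.le_succ, Or.inl hα⟩
    obtain ⟨i, hi⟩ := hf S (not_lt.1 hα)
    refine ⟨insert i S, (S.card_insert_le i).trans (by omega), Or.inr ?_⟩
    push_cast
    linarith

theorem exists_card_le_and_lt (hf₀ : 0 ≤ f ∅)
    (hf : ∀ S, f S ≤ α → ∃ i, f S + δ ≤ f (insert i S)) {n : ℕ} (hn : α < n * δ) :
    ∃ S : Finset ι, S.card ≤ n ∧ α < f S := by
  obtain ⟨S, hS, hlt | hle⟩ := exists_card_le_and_lt_or_add_mul_le f hf n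
  exacts [⟨S, hS, hlt⟩, ⟨S, hS, by linarith⟩]

end Greedy

theorem exists_nat_lt_mul_div_and_le_div {M ε α : ℝ} (hM : 0 < M) (hε : 0 ≤ ε)
    (hεM : 1 - ε ≤ M) (hα : α < 1 - ε) :
    ∃ n : ℕ, α < n * ((1 - α - ε) / M) ∧ (n : ℝ) ≤ M / (1 - α - ε) := by
  have hgap : 0 < 1 - α - ε := by linarith
  have hδ : 0 < (1 - α - ε) / M := by positivity
  rcases lt_or_ge α 0 with hα₀ | hα₀
  · exact ⟨0, by simpa using hα₀, by simp only [Nat.cast_zero]; positivity⟩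
  refine ⟨⌊α / ((1 - α - ε) / M)⌋₊ + 1, ?_, ?_⟩
  · exact_mod_cast (div_lt_iff₀ hδ).1 (Nat.lt_floor_add_one _)
  calc ((⌊α / ((1 - α - ε) / M)⌋₊ + 1 : ℕ) : ℝ) ≤ α / ((1 - α - ε) / M) + 1 := by
        push_cast
        gcongr
        exact Nat.floor_le (by positivity)
    _ = (α * M + (1 - α - ε)) / (1 - α - ε) := by field_simp
    _ ≤ M / (1 - α - ε) := by
        gcongr
        nlinarith

theorem one_sub_measureReal_sub_le_mul {X : Type*} [MeasurableSpace X] {ρ μ : Measure X}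
    [IsFiniteMeasure μ] {Y A : Set X} {M ε : ℝ} (hM : 0 ≤ M) (hε : 0 ≤ ε) (hY : ρ Y = 1)
    (hA : ρ A ≤ μ A)
    (habs : ρ (Y \ A) ≤ ENNReal.ofReal M * μ (Y \ A) + ENNReal.ofReal ε) :
    1 - μ.real A - ε ≤ M * μ.real (Y \ A) := by
  have hcover : (1 : ℝ≥0∞) ≤ ENNReal.ofReal (M * μ.real (Y \ A) + ε + μ.real A) := by
    rw [ENNReal.ofReal_add (by positivity) measureReal_nonneg,
      ENNReal.ofReal_add (by positivity) hε, ENNReal.ofReal_mul hM, ofReal_measureReal,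
      ofReal_measureReal, ← hY]
    calc ρ Y ≤ ρ (Y \ A) + ρ A :=
          (measure_mono (Set.subset_sdiff_union _ _)).trans (measure_union_le _ _)
      _ ≤ _ := by gcongr
  rw [ENNReal.one_le_ofReal] at hcover
  linarith

theorem greedy_covering_general
    {X Z : Type*} [MeasurableSpace X]
    [MeasurableSpace Z]
    (μ : Measure X) [IsProbabilityMeasure μ]
    (ν : Measure Z) [IsProbabilityMeasure ν]
    (μz : Z → Measure X)
    (hmeas : ∀ A : Set X, MeasurableSet A → Measurable fun z => μz z A)
    (hdecomp : ∀ A : Set X, MeasurableSet A → μ A = ∫⁻ z, μz z A ∂ν)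
    (M ε : ℝ) (hM : 0 < M) (hε : 0 ≤ ε)
    (habs : ∀ z, ∀ A : Set X, MeasurableSet A →
      μz z A ≤ ENNReal.ofReal M * μ A + ENNReal.ofReal ε)
    (Y : Z → Set X) (hYmeas : ∀ z, MeasurableSet (Y z))
    (hY : ∀ z, μz z (Y z) = 1) :
    ∀ α : ℝ, α < 1 - ε →
      ∃ S : Finset Z, (S.card : ℝ) ≤ M / (1 - α - ε) ∧
        α < (μ (⋃ z ∈ S, Y z)).toReal := by
  classical
  intro α hα
  have hstep : ∀ A, MeasurableSet A → ∃ z, 1 - μ.real A - ε ≤ M * μ.real (Y z \ A) := by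
    intro A hA
    obtain ⟨z, hz⟩ := exists_le_lintegral (μ := ν) (hmeas A hA).aemeasurable
    exact ⟨z, one_sub_measureReal_sub_le_mul hM.le hε (hY z) (hz.trans (hdecomp A hA).ge)
      (habs z _ ((hYmeas z).diff hA))⟩
  have hεM : 1 - ε ≤ M := by
    obtain ⟨z, hz⟩ := hstep ∅ MeasurableSet.empty
    simp only [measureReal_empty, Set.sdiff_empty, sub_zero] at hz
    nlinarith [measureReal_le_one (μ := μ) (s := Y z)]
  obtain ⟨n, hn, hnM⟩ := exists_nat_lt_mul_div_and_le_div hM hε hεM hα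
  have hgrow : ∀ S : Finset Z, μ.real (⋃ z ∈ S, Y z) ≤ α →
      ∃ z, μ.real (⋃ w ∈ S, Y w) + (1 - α - ε) / M ≤ μ.real (⋃ w ∈ insert z S, Y w) := by
    intro S hSα
    have hU : MeasurableSet (⋃ z ∈ S, Y z) := S.measurableSet_biUnion fun z _ => hYmeas z
    obtain ⟨z, hz⟩ := hstep _ hU
    refine ⟨z, ?_⟩
    rw [Finset.set_biUnion_insert, Set.union_comm, ← Set.union_sdiff_self,
      measureReal_union Set.disjoint_sdiff_right ((hYmeas z).diff hU) (measure_ne_top _ _)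
        (measure_ne_top _ _)]
    gcongr
    rw [div_le_iff₀' hM]
    linarith
  obtain ⟨S, hS, hαS⟩ := exists_card_le_and_lt _ (by simp) hgrow hn
  exact ⟨S, (Nat.cast_le.2 hS).trans hnM, hαS⟩

/-- **Greedy covering lemma.** If a probability measure `μ` on a standard Borel space
decomposes as `μ = ∫ μ_z dν(z)` with each `μ_z ≪_{M,ε} μ` and `μ_z(Y_z) = 1`, then for
every `α < 1 − ε` some union of at most `M/(1 − α − ε)` of the sets `Y_z` has
`μ`-measure greater than `α`. -/
theorem greedy_covering
    {X Z : Type*} [MeasurableSpace X] [StandardBorelSpace X]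
    [MeasurableSpace Z] [StandardBorelSpace Z]
    (μ : Measure X) [IsProbabilityMeasure μ]
    (ν : Measure Z) [IsProbabilityMeasure ν]
    (μz : Z → Measure X)
    (hmeas : ∀ A : Set X, MeasurableSet A → Measurable fun z => μz z A)
    (hbdd : (⨆ z, μz z Set.univ) < ⊤)
    (hdecomp : ∀ A : Set X, MeasurableSet A → μ A = ∫⁻ z, μz z A ∂ν)
    (M ε : ℝ) (hM : 0 < M) (hε : 0 ≤ ε)
    (habs : ∀ z, ∀ A : Set X, MeasurableSet A →
      μz z A ≤ ENNReal.ofReal M * μ A + ENNReal.ofReal ε)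
    (Y : Z → Set X) (hYmeas : ∀ z, MeasurableSet (Y z))
    (hY : ∀ z, μz z (Y z) = 1) :
    ∀ α : ℝ, α < 1 - ε →
      ∃ S : Finset Z, (S.card : ℝ) ≤ M / (1 - α - ε) ∧
        α < (μ (⋃ z ∈ S, Y z)).toReal :=
  greedy_covering_general μ ν μz hmeas hdecomp M ε hM hε habs Y hYmeas hY
end

section
/- Let c, L, a, δ > 0. Let X and Y be standard Borel spaces, each equipped with a pair of totally bounded Borel-measurable pseudometrics (d₁^X, d₂^X) and (d₁^Y, d₂^Y), let μ be a finite Borel measure on X, and let Φ : X → Y be a Borel map which is c-almost L-pair-Lipschitz, i.e. d_i^Y(Φ x, Φ x′) ≤ L·d_i^X(x,x′) + c for i = 1,2 and all x, x′ ∈ X. Then bicov_a((X, d₁^X, d₂^X, μ), δ) ≥ bicov_a((Y, d₁^Y, d₂^Y, Φ_*μ), L·δ + c). -/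
/-!
An almost pair-Lipschitz map `Φ` sends the `δ`-bi-neighbourhood of a finite set `F` into the
`(L δ + c)`-bi-neighbourhood of `Φ '' F`, so `Φ '' F`, which has at most `|F|` points, covers
at least as much `Φ_* μ`-mass as `F` covers `μ`-mass.
-/

open MeasureTheory

/-- A totally bounded Borel-measurable pseudometric. -/
structure IsTBBorelPseudoMetric {X : Type*} [MeasurableSpace X] (d : X → X → ℝ) : Prop where
  refl : ∀ x, d x x = 0
  symm : ∀ x y, d x y = d y x
  triangle : ∀ x y z, d x z ≤ d x y + d y z
  measurable : Measurable (Function.uncurry d)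
  totallyBounded : ∀ ε : ℝ, 0 < ε → ∃ F : Finset X, ∀ x, ∃ y ∈ F, d x y < ε

/-- Open `δ`-neighbourhood of a set for a pseudometric. -/
def pball {X : Type*} (d : X → X → ℝ) (δ : ℝ) (F : Set X) : Set X :=
  {x' | ∃ x ∈ F, d x x' < δ}

/-- The `a`-partial `δ`-bi-covering number of a pair-pseudometric measure space:
the least cardinality of a finite `F ⊆ X` whose `δ`-bi-neighbourhood
`B^{d₂}_δ(B^{d₁}_δ(F))` has (outer) measure greater than `a`. -/
noncomputable def bicov {X : Type*} [MeasurableSpace X]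
    (d₁ d₂ : X → X → ℝ) (μ : Measure X) (a δ : ℝ) : ℕ∞ :=
  sInf {n : ℕ∞ | ∃ F : Finset X, (F.card : ℕ∞) = n ∧
    ENNReal.ofReal a < μ (pball d₂ δ (pball d₁ δ ↑F))}

section Covering

variable {X Y : Type*}

theorem pball_mono {d : X → X → ℝ} {δ : ℝ} {F G : Set X} (h : F ⊆ G) :
    pball d δ F ⊆ pball d δ G :=
  fun _ ⟨x, hx, hd⟩ => ⟨x, h hx, hd⟩

theorem image_pball_subset_of_almost_lipschitz {d : X → X → ℝ} {d' : Y → Y → ℝ}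
    {Φ : X → Y} {L c : ℝ} (hL : 0 < L) (hΦ : ∀ x x', d' (Φ x) (Φ x') ≤ L * d x x' + c)
    (δ : ℝ) (F : Set X) : Φ '' pball d δ F ⊆ pball d' (L * δ + c) (Φ '' F) := by
  rintro _ ⟨x', ⟨x, hx, hd⟩, rfl⟩
  refine ⟨Φ x, Set.mem_image_of_mem Φ hx, ?_⟩
  calc d' (Φ x) (Φ x') ≤ L * d x x' + c := hΦ x x'
    _ < L * δ + c := by gcongr

theorem image_bi_pball_subset_of_almost_pair_lipschitz
    {d₁ d₂ : X → X → ℝ} {d₁' d₂' : Y → Y → ℝ} {Φ : X → Y} {L c : ℝ} (hL : 0 < L)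
    (hΦ₁ : ∀ x x', d₁' (Φ x) (Φ x') ≤ L * d₁ x x' + c)
    (hΦ₂ : ∀ x x', d₂' (Φ x) (Φ x') ≤ L * d₂ x x' + c) (δ : ℝ) (F : Set X) :
    Φ '' pball d₂ δ (pball d₁ δ F) ⊆ pball d₂' (L * δ + c) (pball d₁' (L * δ + c) (Φ '' F)) :=
  (image_pball_subset_of_almost_lipschitz hL hΦ₂ δ _).trans
    (pball_mono (image_pball_subset_of_almost_lipschitz hL hΦ₁ δ F))

theorem bicov_le_card [MeasurableSpace X] {d₁ d₂ : X → X → ℝ} {μ : Measure X}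
    {a δ : ℝ} (F : Finset X) (hF : ENNReal.ofReal a < μ (pball d₂ δ (pball d₁ δ ↑F))) :
    bicov d₁ d₂ μ a δ ≤ F.card :=
  sInf_le ⟨F, rfl, hF⟩

theorem bicov_le_bicov [MeasurableSpace X] [MeasurableSpace Y]
    {d₁ d₂ : X → X → ℝ} {d₁' d₂' : Y → Y → ℝ} {μ : Measure X} {ν : Measure Y} {a δ ε : ℝ}
    (h : ∀ F : Finset X, ENNReal.ofReal a < μ (pball d₂ δ (pball d₁ δ ↑F)) →
      ∃ G : Finset Y, G.card ≤ F.card ∧ ENNReal.ofReal a < ν (pball d₂' ε (pball d₁' ε ↑G))) :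
    bicov d₁' d₂' ν a ε ≤ bicov d₁ d₂ μ a δ := by
  refine le_sInf ?_
  rintro n ⟨F, rfl, hF⟩
  obtain ⟨G, hGF, hG⟩ := h F hF
  exact (bicov_le_card G hG).trans (by exact_mod_cast hGF)

theorem measure_le_map_apply_of_image_subset [MeasurableSpace X]
    [MeasurableSpace Y] {μ : Measure X} {Φ : X → Y} (hΦ : Measurable Φ) {s : Set X}
    {t : Set Y} (hst : Φ '' s ⊆ t) : μ s ≤ Measure.map Φ μ t :=
  calc μ s ≤ μ (Φ ⁻¹' t) := measure_mono (Set.image_subset_iff.mp hst)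
    _ ≤ Measure.map Φ μ t := Measure.le_map_apply hΦ.aemeasurable t

end Covering

theorem bicov_le_of_almost_pair_lipschitz_general
    {X Y : Type*} [MeasurableSpace X] [MeasurableSpace Y]
    (d₁X d₂X : X → X → ℝ) (d₁Y d₂Y : Y → Y → ℝ)
    (μ : Measure X) (c L a δ : ℝ) (hL : 0 < L)
    (Φ : X → Y) (hΦ : Measurable Φ)
    (hLip₁ : ∀ x x', d₁Y (Φ x) (Φ x') ≤ L * d₁X x x' + c)
    (hLip₂ : ∀ x x', d₂Y (Φ x) (Φ x') ≤ L * d₂X x x' + c) :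
    bicov d₁Y d₂Y (Measure.map Φ μ) a (L * δ + c) ≤ bicov d₁X d₂X μ a δ := by
  classical
  refine bicov_le_bicov fun F hF => ⟨F.image Φ, Finset.card_image_le, ?_⟩
  rw [Finset.coe_image]
  exact hF.trans_le <| measure_le_map_apply_of_image_subset hΦ <|
    image_bi_pball_subset_of_almost_pair_lipschitz hL hLip₁ hLip₂ δ F

/-- **Monotonicity of partial bi-covering numbers under almost pair-Lipschitz maps.** -/
theorem bicov_le_of_almost_pair_lipschitz
    {X Y : Type*} [MeasurableSpace X] [StandardBorelSpace X]
    [MeasurableSpace Y] [StandardBorelSpace Y]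
    (d₁X d₂X : X → X → ℝ) (d₁Y d₂Y : Y → Y → ℝ)
    (h₁X : IsTBBorelPseudoMetric d₁X) (h₂X : IsTBBorelPseudoMetric d₂X)
    (h₁Y : IsTBBorelPseudoMetric d₁Y) (h₂Y : IsTBBorelPseudoMetric d₂Y)
    (μ : Measure X) [IsFiniteMeasure μ]
    (c L a δ : ℝ) (hc : 0 < c) (hL : 0 < L) (ha : 0 < a) (hδ : 0 < δ)
    (Φ : X → Y) (hΦ : Measurable Φ)
    (hLip₁ : ∀ x x', d₁Y (Φ x) (Φ x') ≤ L * d₁X x x' + c)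
    (hLip₂ : ∀ x x', d₂Y (Φ x) (Φ x') ≤ L * d₂X x x' + c) :
    bicov d₁Y d₂Y (Measure.map Φ μ) a (L * δ + c) ≤ bicov d₁X d₂X μ a δ :=
  bicov_le_of_almost_pair_lipschitz_general d₁X d₂X d₁Y d₂Y μ c L a δ hL Φ hΦ hLip₁ hLip₂
end

section
/- Let (X, d^X, μ, T) and (Y, d^Y, ν, S) be compact model probability-preserving systems, let Φ : X → Y be a Borel factor map (Φ_*μ = ν and Φ ∘ T = S ∘ Φ μ-almost everywhere), and let ε > 0. Then there is L < ∞ such that for all sufficiently large N ∈ ℕ there is a compact subset X₀ ⊆ X with μ(X₀) > 1 − ε on which Φ is continuous and (εN)-almost L-pair-Lipschitz from (X₀, d^X_{[-N;0)}, d^X_{[0;N)}) to (Y, d^Y_{[-N;0)}, d^Y_{[0;N)}); that is, for all x, x′ ∈ X₀ and both I = [-N;0) and I = [0;N), one has d^Y_I(Φ x, Φ x′) ≤ L·d^X_I(x,x′) + εN. -/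
open MeasureTheory

/-- The marginal pseudometric `d^X_I(x,x′) := ∑_{n∈I} d(T^n x, T^n x′)` of a
compact model system, for a finite set `I ⊆ ℤ`. -/
noncomputable def margMetric {X : Type*} [MetricSpace X] (T : Equiv.Perm X)
    (I : Finset ℤ) (x x' : X) : ℝ :=
  ∑ n ∈ I, dist ((T ^ n) x) ((T ^ n) x')

/-!
By Lusin's theorem there is a compact set `K` of measure close to one on which `Φ` is continuous,
hence uniformly continuous, and along whose points `Φ ∘ T ^ n = S ^ n ∘ Φ` for every `n`. Uniform
continuity gives `d(Φ a, Φ b) ≤ L d(a, b) + ε / 2` on `K`, while `d(Φ a, Φ b) ≤ diam Y` always, so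
summing along an orbit segment of length `N` costs an extra `diam Y` for each visit outside `K`.
Since `T` preserves `μ`, the expected number of such visits is `N μ Kᶜ`; by Markov's inequality the
points visiting `Kᶜ` more than `N / p` times form a set of measure at most `p μ Kᶜ`, and that set is
open because the visit count is lower semicontinuous.
-/

open Set TopologicalSpace
open scoped ENNReal

section Iterates

variable {X Y : Type*}

theorem Equiv.Perm.continuous_zpow [TopologicalSpace X] {T : Equiv.Perm X} (hT : Continuous T)
    (hT' : Continuous T.symm) (n : ℤ) : Continuous ⇑(T ^ n) :=
  zpow_induction_right (P := fun g : Equiv.Perm X => Continuous g) continuous_id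
    (fun _ hg => hg.comp hT) (fun _ hg => hg.comp hT') n

theorem MeasureTheory.MeasurePreserving.perm_zpow [MeasurableSpace X] {μ : Measure X}
    {T : Equiv.Perm X} (hT : MeasurePreserving T μ μ) (hT' : MeasurePreserving T.symm μ μ)
    (n : ℤ) : MeasurePreserving ⇑(T ^ n) μ μ :=
  zpow_induction_right (P := fun g : Equiv.Perm X => MeasurePreserving g μ μ)
    (MeasurePreserving.id μ) (fun _ hg => hg.comp hT) (fun _ hg => hg.comp hT') n

theorem ae_semiconj_zpow [MeasurableSpace X] {μ : Measure X} {T : Equiv.Perm X}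
    {S : Equiv.Perm Y} {Φ : X → Y} (hT : Measure.QuasiMeasurePreserving T μ μ)
    (hT' : Measure.QuasiMeasurePreserving T.symm μ μ) (h : ∀ᵐ x ∂μ, Φ (T x) = S (Φ x)) (n : ℤ) :
    ∀ᵐ x ∂μ, Φ ((T ^ n) x) = (S ^ n) (Φ x) := by
  have h_symm : ∀ᵐ x ∂μ, Φ (T.symm x) = S.symm (Φ x) := by
    filter_upwards [hT'.ae h] with x hx
    rw [Equiv.apply_symm_apply] at hx
    rw [hx, Equiv.symm_apply_apply]
  simpa using zpow_induction_right (g := (T, S))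
    (P := fun g => ∀ᵐ x ∂μ, Φ (g.1 x) = g.2 (Φ x)) (by simp)
    (fun g hg => by filter_upwards [hT.ae hg, h] with x h₁ h₂; simp [h₁, h₂])
    (fun g hg => by filter_upwards [hT'.ae hg, h_symm] with x h₁ h₂; simp [h₁, h₂]) n

end Iterates

section Lusin

variable {X Y : Type*} [TopologicalSpace X] [MeasurableSpace X] [OpensMeasurableSpace X]
  {μ : Measure X} [IsFiniteMeasure μ] [μ.WeaklyRegular]

theorem MeasurableSet.exists_isClosed_measure_compl_lt_inter_eq {s : Set X} (hs : MeasurableSet s)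
    {ε : ℝ≥0∞} (hε : ε ≠ 0) :
    ∃ F U, IsClosed F ∧ IsOpen U ∧ μ Fᶜ < ε ∧ s ∩ F = U ∩ F := by
  have hε₂ := (ENNReal.half_pos hε).ne'
  obtain ⟨C, hCs, hC, hμC⟩ := hs.exists_isClosed_sdiff_lt (measure_ne_top μ s) hε₂
  obtain ⟨C', hC's, hC', hμC'⟩ := hs.compl.exists_isClosed_sdiff_lt (measure_ne_top μ sᶜ) hε₂
  refine ⟨C ∪ C', C'ᶜ, hC.union hC', hC'.isOpen_compl, ?_, ?_⟩
  · calc μ (C ∪ C')ᶜ ≤ μ ((s \ C) ∪ (sᶜ \ C')) := measure_mono fun x hx => by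
          by_cases hxs : x ∈ s <;> simp_all
      _ ≤ μ (s \ C) + μ (sᶜ \ C') := measure_union_le _ _
      _ < ε / 2 + ε / 2 := ENNReal.add_lt_add hμC hμC'
      _ = ε := ENNReal.add_halves ε
  · ext x
    have := @hCs x
    have := @hC's x
    by_cases hxs : x ∈ s <;> simp_all

theorem Measurable.exists_isClosed_measure_compl_lt_continuousOn [TopologicalSpace Y]
    [MeasurableSpace Y] [OpensMeasurableSpace Y] [SecondCountableTopology Y] {f : X → Y}
    (hf : Measurable f) {ε : ℝ≥0∞} (hε : ε ≠ 0) :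
    ∃ K, IsClosed K ∧ μ Kᶜ < ε ∧ ContinuousOn f K := by
  have := (countable_countableBasis Y).to_subtype
  obtain ⟨δ, hδ, hδε⟩ := ENNReal.exists_pos_sum_of_countable' hε (countableBasis Y)
  choose F U hF hU hμF hFU using fun b : countableBasis Y =>
    (hf (isOpen_of_mem_countableBasis b.2).measurableSet).exists_isClosed_measure_compl_lt_inter_eq
      (μ := μ) (hδ b).ne'
  refine ⟨⋂ b, F b, isClosed_iInter hF, ?_, ?_⟩
  · rw [compl_iInter]
    exact (measure_iUnion_le _).trans_lt
      ((ENNReal.tsum_le_tsum fun b => (hμF b).le).trans_lt hδε)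
  · refine (isBasis_countableBasis Y).continuousOn_iff.2 fun t ht => ⟨U ⟨t, ht⟩, hU _, ?_⟩
    have hK : ⋂ b, F b ⊆ F ⟨t, ht⟩ := iInter_subset _ _
    rw [← inter_eq_right.2 hK, ← inter_assoc, ← inter_assoc]
    exact congrArg (· ∩ ⋂ b, F b) (hFU ⟨t, ht⟩)

theorem Measurable.exists_isClosed_measure_compl_lt_continuousOn_of_ae [TopologicalSpace Y]
    [MeasurableSpace Y] [OpensMeasurableSpace Y] [SecondCountableTopology Y] {f : X → Y}
    (hf : Measurable f) {p : X → Prop} (hp : ∀ᵐ x ∂μ, p x) {ε : ℝ≥0∞} (hε : ε ≠ 0) :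
    ∃ K, IsClosed K ∧ μ Kᶜ < ε ∧ ContinuousOn f K ∧ ∀ x ∈ K, p x := by
  obtain ⟨s, hs_ae, hs, hsp⟩ := hp.exists_measurable_mem
  have hε₂ := (ENNReal.half_pos hε).ne'
  obtain ⟨K, hK, hμK, hfK⟩ := hf.exists_isClosed_measure_compl_lt_continuousOn (μ := μ) hε₂
  obtain ⟨C, hCs, hC, hμC⟩ := hs.exists_isClosed_sdiff_lt (measure_ne_top μ s) hε₂
  refine ⟨K ∩ C, hK.inter hC, ?_, hfK.mono inter_subset_left, fun x hx => hsp x (hCs hx.2)⟩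
  calc μ (K ∩ C)ᶜ ≤ μ (Kᶜ ∪ (s \ C) ∪ sᶜ) := measure_mono fun x hx => by
        by_cases hxs : x ∈ s <;> simp_all [or_iff_not_imp_left]
    _ ≤ μ Kᶜ + μ (s \ C) + μ sᶜ :=
        (measure_union_le _ _).trans (by gcongr; exact measure_union_le _ _)
    _ = μ Kᶜ + μ (s \ C) := by rw [mem_ae_iff.1 hs_ae, add_zero]
    _ < ε / 2 + ε / 2 := ENNReal.add_lt_add hμK hμC
    _ = ε := ENNReal.add_halves ε

end Lusin

theorem one_sub_lt_toReal_of_measure_compl_lt {X : Type*} [MeasurableSpace X] {μ : Measure X}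
    [IsProbabilityMeasure μ] {s : Set X} (hs : MeasurableSet s) {ε : ℝ}
    (h : μ sᶜ < ENNReal.ofReal ε) : 1 - ε < (μ s).toReal := by
  have h' := ENNReal.toReal_lt_of_lt_ofReal h
  rw [← measureReal_def, probReal_compl_eq_one_sub hs] at h'
  rw [← measureReal_def]
  linarith

theorem IsCompact.exists_dist_le_mul_add {X Y : Type*} [PseudoMetricSpace X] [PseudoMetricSpace Y]
    {K : Set X} {f : X → Y} (hK : IsCompact K) (hf : ContinuousOn f K) {c : ℝ} (hc : 0 < c) :
    ∃ L, 0 ≤ L ∧ ∀ a ∈ K, ∀ b ∈ K, dist (f a) (f b) ≤ L * dist a b + c := by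
  obtain ⟨δ, hδ, hfδ⟩ :=
    Metric.uniformContinuousOn_iff.1 (hK.uniformContinuousOn_of_continuous hf) c hc
  set D := Metric.diam (f '' K)
  refine ⟨D / δ, by positivity, fun a ha b hb => ?_⟩
  have hLab : 0 ≤ D / δ * dist a b := by positivity
  rcases lt_or_ge (dist a b) δ with hab | hab
  · linarith [hfδ a ha b hb hab]
  · calc dist (f a) (f b) ≤ D := Metric.dist_le_diam_of_mem
          (hK.image_of_continuousOn hf).isBounded (mem_image_of_mem f ha) (mem_image_of_mem f hb)
      _ = D / δ * δ := by field_simp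
      _ ≤ D / δ * dist a b := by gcongr
      _ ≤ D / δ * dist a b + c := by linarith

section OutsideCount

variable {X : Type*} (T : Equiv.Perm X) (K : Set X) (I : Finset ℤ)

open Classical in
noncomputable def outsideCount (x : X) : ℕ := (I.filter fun n => (T ^ n) x ∉ K).card

theorem outsideCount_eq_sum_indicator {M : Type*} [AddCommMonoidWithOne M] (x : X) :
    (outsideCount T K I x : M) = ∑ n ∈ I, ((T ^ n) ⁻¹' Kᶜ).indicator 1 x := by
  classical
  simp [outsideCount, Finset.card_filter, Set.indicator_apply]

theorem isClosed_setOf_outsideCount_le [TopologicalSpace X] (hT : ∀ n : ℤ, Continuous ⇑(T ^ n))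
    {K : Set X} (hK : IsClosed K) (m : ℕ) : IsClosed {x | outsideCount T K I x ≤ m} := by
  have : LowerSemicontinuous (outsideCount T K I) := by
    rw [show outsideCount T K I = fun x => ∑ n ∈ I, ((T ^ n) ⁻¹' Kᶜ).indicator 1 x from
      funext fun x => by simpa using outsideCount_eq_sum_indicator T K I (M := ℕ) x]
    exact lowerSemicontinuous_sum fun n _ =>
      (hK.isOpen_compl.preimage (hT n)).lowerSemicontinuous_indicator zero_le_one
  exact this.isClosed_preimage m

variable [MeasurableSpace X] {μ : Measure X}

theorem lintegral_outsideCount (hT : ∀ n : ℤ, MeasurePreserving ⇑(T ^ n) μ μ)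
    (hK : MeasurableSet K) : ∫⁻ x, outsideCount T K I x ∂μ = I.card * μ Kᶜ := by
  simp_rw [outsideCount_eq_sum_indicator (M := ℝ≥0∞)]
  have hpre (n : ℤ) : MeasurableSet (⇑(T ^ n) ⁻¹' Kᶜ) := (hT n).measurable hK.compl
  rw [lintegral_finsetSum _ fun n _ => measurable_one.indicator (hpre n)]
  simp_rw [lintegral_indicator_one (hpre _), (hT _).measure_preimage hK.compl.nullMeasurableSet,
    Finset.sum_const, nsmul_eq_mul]

theorem measure_lt_outsideCount_le (hT : ∀ n : ℤ, MeasurePreserving ⇑(T ^ n) μ μ)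
    (hK : MeasurableSet K) {m p : ℕ} (hI : I.card ≤ p * (m + 1)) :
    μ {x | m < outsideCount T K I x} ≤ p * μ Kᶜ := by
  have hmeas : Measurable fun x => (outsideCount T K I x : ℝ≥0∞) := by
    simp_rw [outsideCount_eq_sum_indicator (M := ℝ≥0∞)]
    exact Finset.measurable_sum _ fun n _ => measurable_one.indicator ((hT n).measurable hK.compl)
  have markov := mul_meas_ge_le_lintegral₀ (hmeas.aemeasurable (μ := μ)) (m + 1)
  rw [lintegral_outsideCount T K I hT hK] at markov
  refine (ENNReal.mul_le_mul_iff_right (a := (m + 1 : ℝ≥0∞)) (by simp) (by simp)).1 ?_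
  calc (m + 1 : ℝ≥0∞) * μ {x | m < outsideCount T K I x}
      = (m + 1) * μ {x | (m + 1 : ℝ≥0∞) ≤ outsideCount T K I x} := by
        congr 2; ext x; norm_cast
    _ ≤ I.card * μ Kᶜ := markov
    _ ≤ (p * (m + 1) : ℕ) * μ Kᶜ := by gcongr
    _ = (m + 1) * (p * μ Kᶜ) := by push_cast; ring

end OutsideCount

section PairLipschitz

variable {X Y : Type*} [MetricSpace X] [MetricSpace Y] {K : Set X} {L c D : ℝ}

theorem dist_le_mul_add_add_indicator {f : X → Y} (hL : 0 ≤ L) (hc : 0 ≤ c)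
    (hD : ∀ y y' : Y, dist y y' ≤ D) (hK : ∀ a ∈ K, ∀ b ∈ K, dist (f a) (f b) ≤ L * dist a b + c)
    (a b : X) :
    dist (f a) (f b) ≤ L * dist a b + c + D * (Kᶜ.indicator 1 a + Kᶜ.indicator 1 b) := by
  have hD₀ : 0 ≤ D := dist_self (f a) ▸ hD (f a) (f a)
  have hb₀ : 0 ≤ Kᶜ.indicator (1 : X → ℝ) b := indicator_nonneg (fun _ _ => zero_le_one) b
  have hLab : 0 ≤ L * dist a b := by positivity
  by_cases ha : a ∈ K
  · by_cases hb : b ∈ K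
    · simpa [ha, hb] using hK a ha b hb
    · simp only [indicator_of_notMem (notMem_compl_iff.2 ha), indicator_of_mem (mem_compl hb),
        Pi.one_apply]
      linarith [hD (f a) (f b)]
  · rw [indicator_of_mem (mem_compl ha), Pi.one_apply]
    nlinarith [hD (f a) (f b), mul_nonneg hD₀ hb₀]

theorem margMetric_le_of_semiconj {T : Equiv.Perm X} {S : Equiv.Perm Y} {Φ : X → Y}
    (hL : 0 ≤ L) (hc : 0 ≤ c) (hD : ∀ y y' : Y, dist y y' ≤ D)
    (hK : ∀ a ∈ K, ∀ b ∈ K, dist (Φ a) (Φ b) ≤ L * dist a b + c) {x x' : X}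
    (hx : ∀ n : ℤ, Φ ((T ^ n) x) = (S ^ n) (Φ x)) (hx' : ∀ n : ℤ, Φ ((T ^ n) x') = (S ^ n) (Φ x'))
    (I : Finset ℤ) :
    margMetric S I (Φ x) (Φ x') ≤ L * margMetric T I x x' + c * I.card
      + D * (outsideCount T K I x + outsideCount T K I x') := by
  simp only [margMetric, ← hx, ← hx', outsideCount_eq_sum_indicator (M := ℝ)]
  calc ∑ n ∈ I, dist (Φ ((T ^ n) x)) (Φ ((T ^ n) x'))
      ≤ ∑ n ∈ I, (L * dist ((T ^ n) x) ((T ^ n) x') + c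
          + D * (Kᶜ.indicator 1 ((T ^ n) x) + Kᶜ.indicator 1 ((T ^ n) x'))) :=
        Finset.sum_le_sum fun n _ => dist_le_mul_add_add_indicator hL hc hD hK _ _
    _ = _ := by
        simp only [Finset.sum_add_distrib, ← Finset.mul_sum, Finset.sum_const, nsmul_eq_mul,
          mul_comm c]
        rfl

variable [MeasurableSpace X] [OpensMeasurableSpace X] {μ : Measure X}

theorem exists_isClosed_margMetric_le {T : Equiv.Perm X} {S : Equiv.Perm Y} {Φ : X → Y}
    (hTc : ∀ n : ℤ, Continuous ⇑(T ^ n)) (hTμ : ∀ n : ℤ, MeasurePreserving ⇑(T ^ n) μ μ)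
    (hK : IsClosed K) (hKΦ : ∀ x ∈ K, ∀ n : ℤ, Φ ((T ^ n) x) = (S ^ n) (Φ x))
    (hL : 0 ≤ L) (hc : 0 ≤ c) (hLK : ∀ a ∈ K, ∀ b ∈ K, dist (Φ a) (Φ b) ≤ L * dist a b + c / 2)
    (hD : ∀ y y' : Y, dist y y' ≤ D) {p : ℕ} (hp : 0 < p) (hDp : 4 * D ≤ c * p)
    (I : Finset ℤ) {N : ℕ} (hI : I.card = N) :
    ∃ A, IsClosed A ∧ μ Aᶜ ≤ p * μ Kᶜ ∧ ∀ x ∈ K ∩ A, ∀ x' ∈ K ∩ A,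
      margMetric S I (Φ x) (Φ x') ≤ L * margMetric T I x x' + c * N := by
  subst hI
  refine ⟨{x | outsideCount T K I x ≤ I.card / p}, isClosed_setOf_outsideCount_le T I hTc hK _,
    ?_, fun x hx x' hx' => ?_⟩
  · simpa [compl_ofPred] using measure_lt_outsideCount_le T K I hTμ hK.measurableSet
      (Nat.lt_mul_div_succ I.card hp).le
  · have hx₂ : outsideCount T K I x ≤ I.card / p := hx.2
    have hx'₂ : outsideCount T K I x' ≤ I.card / p := hx'.2
    have hcount : (outsideCount T K I x + outsideCount T K I x') * p ≤ 2 * I.card := by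
      nlinarith [Nat.div_mul_le_self I.card p]
    replace hcount : (outsideCount T K I x + outsideCount T K I x' : ℝ) * p ≤ 2 * I.card := by
      exact_mod_cast hcount
    calc margMetric S I (Φ x) (Φ x')
        ≤ L * margMetric T I x x' + c / 2 * I.card
          + D * (outsideCount T K I x + outsideCount T K I x') :=
          margMetric_le_of_semiconj hL (by positivity) hD hLK (hKΦ x hx.1) (hKΦ x' hx'.1) I
      _ ≤ L * margMetric T I x x' + c * I.card := by nlinarith

end PairLipschitz

theorem factor_map_almost_pair_lipschitz_general
    {X Y : Type*}
    [MetricSpace X] [CompactSpace X] [MeasurableSpace X] [BorelSpace X]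
    [MetricSpace Y] [CompactSpace Y] [MeasurableSpace Y] [BorelSpace Y]
    (T : Equiv.Perm X) (hTc : Continuous ⇑T) (hTc' : Continuous ⇑T.symm)
    (S : Equiv.Perm Y)
    (μ : Measure X) [IsProbabilityMeasure μ] (hT : MeasurePreserving ⇑T μ μ)
    (Φ : X → Y) (hΦ : Measurable Φ)
    (hequiv : ∀ᵐ x ∂μ, Φ (T x) = S (Φ x))
    (ε : ℝ) (hε : 0 < ε) :
    ∃ L : ℝ, ∃ N₀ : ℕ, ∀ N : ℕ, N₀ ≤ N →
      ∃ X₀ : Set X, IsCompact X₀ ∧ 1 - ε < (μ X₀).toReal ∧ ContinuousOn Φ X₀ ∧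
        ∀ x ∈ X₀, ∀ x' ∈ X₀,
          margMetric S (Finset.Ico (-(N : ℤ)) 0) (Φ x) (Φ x')
              ≤ L * margMetric T (Finset.Ico (-(N : ℤ)) 0) x x' + ε * N ∧
          margMetric S (Finset.Ico (0 : ℤ) (N : ℤ)) (Φ x) (Φ x')
              ≤ L * margMetric T (Finset.Ico (0 : ℤ) (N : ℤ)) x x' + ε * N := by
  obtain ⟨D, hD⟩ : ∃ D, ∀ y y' : Y, dist y y' ≤ D :=
    ⟨_, fun y y' => Metric.dist_le_diam_of_mem isCompact_univ.isBounded (mem_univ y) (mem_univ y')⟩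
  obtain ⟨p, hp₀, hDp⟩ : ∃ p : ℕ, 0 < p ∧ 4 * D ≤ ε * p := by
    obtain ⟨p, hp⟩ := exists_nat_ge (4 * D / ε)
    refine ⟨p + 1, p.succ_pos, ?_⟩
    rw [div_le_iff₀ hε] at hp
    push_cast
    linarith
  have hT' : MeasurePreserving T.symm μ μ :=
    MeasurePreserving.symm (Homeomorph.mk T hTc hTc').toMeasurableEquiv hT
  obtain ⟨K, hK, hμK, hΦK, hKΦ⟩ := hΦ.exists_isClosed_measure_compl_lt_continuousOn_of_ae
    (ae_all_iff.2 (ae_semiconj_zpow hT.quasiMeasurePreserving hT'.quasiMeasurePreserving hequiv))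
    (ε := ENNReal.ofReal ε / (1 + 2 * p)) (by simp [hε, ENNReal.mul_eq_top])
  obtain ⟨L, hL, hLK⟩ := hK.isCompact.exists_dist_le_mul_add hΦK (half_pos hε)
  have hA := exists_isClosed_margMetric_le (S := S) (T.continuous_zpow hTc hTc')
    (hT.perm_zpow hT') hK hKΦ hL hε.le hLK hD hp₀ hDp
  refine ⟨L, 0, fun N _ => ?_⟩
  obtain ⟨A₁, hA₁, hμA₁, hA₁Φ⟩ := hA (Finset.Ico (-(N : ℤ)) 0) (N := N) (by simp)
  obtain ⟨A₂, hA₂, hμA₂, hA₂Φ⟩ := hA (Finset.Ico 0 (N : ℤ)) (N := N) (by simp)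
  have hX₀ : IsClosed (K ∩ A₁ ∩ A₂) := (hK.inter hA₁).inter hA₂
  have hμX₀ : μ (K ∩ A₁ ∩ A₂)ᶜ < ENNReal.ofReal ε := calc
    μ (K ∩ A₁ ∩ A₂)ᶜ ≤ μ Kᶜ + p * μ Kᶜ + p * μ Kᶜ := by
      simp only [compl_inter]
      exact (measure_union_le _ _).trans
        (add_le_add ((measure_union_le _ _).trans (add_le_add le_rfl hμA₁)) hμA₂)
    _ = (1 + 2 * p) * μ Kᶜ := by ring
    _ < ENNReal.ofReal ε := ENNReal.mul_lt_of_lt_div' hμK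
  exact ⟨_, hX₀.isCompact, one_sub_lt_toReal_of_measure_compl_lt hX₀.measurableSet hμX₀,
    hΦK.mono fun x hx => hx.1.1, fun x hx x' hx' =>
      ⟨hA₁Φ x ⟨hx.1.1, hx.1.2⟩ x' ⟨hx'.1.1, hx'.1.2⟩, hA₂Φ x ⟨hx.1.1, hx.2⟩ x' ⟨hx'.1.1, hx'.2⟩⟩⟩

/-- **Factor maps are almost pair-Lipschitz on a large compact set.** -/
theorem factor_map_almost_pair_lipschitz
    {X Y : Type*}
    [MetricSpace X] [CompactSpace X] [MeasurableSpace X] [BorelSpace X]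
    [MetricSpace Y] [CompactSpace Y] [MeasurableSpace Y] [BorelSpace Y]
    (T : Equiv.Perm X) (hTc : Continuous ⇑T) (hTc' : Continuous ⇑T.symm)
    (S : Equiv.Perm Y) (hSc : Continuous ⇑S) (hSc' : Continuous ⇑S.symm)
    (μ : Measure X) [IsProbabilityMeasure μ] (hT : MeasurePreserving ⇑T μ μ)
    (ν : Measure Y) [IsProbabilityMeasure ν] (hS : MeasurePreserving ⇑S ν ν)
    (Φ : X → Y) (hΦ : Measurable Φ) (hmap : Measure.map Φ μ = ν)
    (hequiv : ∀ᵐ x ∂μ, Φ (T x) = S (Φ x))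
    (ε : ℝ) (hε : 0 < ε) :
    ∃ L : ℝ, ∃ N₀ : ℕ, ∀ N : ℕ, N₀ ≤ N →
      ∃ X₀ : Set X, IsCompact X₀ ∧ 1 - ε < (μ X₀).toReal ∧ ContinuousOn Φ X₀ ∧
        ∀ x ∈ X₀, ∀ x' ∈ X₀,
          margMetric S (Finset.Ico (-(N : ℤ)) 0) (Φ x) (Φ x')
              ≤ L * margMetric T (Finset.Ico (-(N : ℤ)) 0) x x' + ε * N ∧
          margMetric S (Finset.Ico (0 : ℤ) (N : ℤ)) (Φ x) (Φ x')
              ≤ L * margMetric T (Finset.Ico (0 : ℤ) (N : ℤ)) x x' + ε * N :=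
  factor_map_almost_pair_lipschitz_general T hTc hTc' S μ hT Φ hΦ hequiv ε hε
end

section
/- Let (X,d) be a compact metric space and let T : ℝ × X → X be a jointly continuous flow (T^0 = id and T^{s+t} = T^s ∘ T^t). Then for every ε, δ > 0 there is δ₁ > 0 such that for every x ∈ X and every compact interval K ⊆ ℝ of length Leb(K) ≥ 1, cov( ( B^{d_K}_{δ₁·Leb(K)}(x), d^∞_K ), δ ) < exp(ε·Leb(K)). -/
open MeasureTheory
open scoped ENNReal

noncomputable def covN {X : Type*} (A : Set X) (ρ : X → X → ℝ) (δ : ℝ) : ℕ∞ :=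
  sInf {n : ℕ∞ | ∃ F : Finset X, ↑F ⊆ A ∧ (F.card : ℕ∞) = n ∧
    ∀ a ∈ A, ∃ b ∈ F, ρ b a < δ}

/-!
Cut `[a, b]` into `m ≈ (b - a) / η` pieces, where `η` is a uniform modulus of continuity of
`t ↦ T t y` (it exists by compactness and the flow property). Code `y` by recording, on each
piece where the orbit of `y` gets `δ/4` away from that of `x`, the cell of a finite
`δ/4`-partition of `X` containing the position of `y` at the start of the piece. Equal codes
force `d^∞_K < δ`. On a recorded piece the two orbits stay `δ/8` apart throughout, so
`d_K(x, y) < δ₁ (b - a)` leaves at most `8 δ₁ m / δ` recorded pieces, and for small `δ₁` the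
codes with so sparse a support number at most `exp (ε (b - a) / 2)`.
-/

open Set Filter Topology Finset

theorem covN_le_card_of_map {X κ : Type*} {A : Set X} {ρ : X → X → ℝ} {δ : ℝ}
    (f : X → κ) (C : Finset κ) (hC : ∀ y ∈ A, f y ∈ C)
    (hf : ∀ y ∈ A, ∀ z ∈ A, f y = f z → ρ y z < δ) :
    covN A ρ δ ≤ #C := by
  classical
  let S := {c ∈ C | ∃ y ∈ A, f y = c}
  have hrep : ∀ c : S, ∃ y ∈ A, f y = c := fun c => (mem_filter.1 c.2).2
  choose rep hrepA hrepf using hrep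
  let F := (Finset.univ : Finset S).image rep
  have hFA : ↑F ⊆ A := by
    simp only [F, coe_image, coe_univ, Set.image_univ, Set.range_subset_iff]
    exact hrepA
  have hFcov : ∀ z ∈ A, ∃ y ∈ F, ρ y z < δ := fun z hz =>
    let c : S := ⟨f z, mem_filter.2 ⟨hC z hz, z, hz, rfl⟩⟩
    ⟨rep c, mem_image_of_mem _ (Finset.mem_univ c), hf _ (hrepA c) z hz (hrepf c)⟩
  calc covN A ρ δ ≤ #F := sInf_le ⟨F, hFA, rfl, hFcov⟩
    _ ≤ #C := by
      exact_mod_cast card_image_le.trans ((card_univ.trans (Fintype.card_coe S)).le.trans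
        (card_filter_le _ _))

theorem exists_dist_lt_of_abs_sub_le {X : Type*} [MetricSpace X] [CompactSpace X]
    {T : ℝ → X → X} (hcont : Continuous fun p : ℝ × X => T p.1 p.2)
    (h0 : ∀ x, T 0 x = x) (hadd : ∀ s t : ℝ, ∀ x, T (s + t) x = T s (T t x))
    {e : ℝ} (he : 0 < e) :
    ∃ η > 0, ∀ s t : ℝ, |s - t| ≤ η → ∀ y, dist (T s y) (T t y) < e := by
  have hnear : ∀ᶠ s in 𝓝 (0 : ℝ), ∀ y ∈ (univ : Set X), dist (T s y) y < e := by
    refine isCompact_univ.eventually_forall_of_forall_eventually fun y _ => ?_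
    have hc : Continuous fun p : ℝ × X => dist (T p.1 p.2) p.2 := hcont.dist continuous_snd
    exact hc.continuousAt.eventually_lt continuousAt_const (by simpa [h0] using he)
  obtain ⟨η, hη, hball⟩ := Metric.eventually_nhds_iff.1 hnear
  refine ⟨η / 2, half_pos hη, fun s t hst y => ?_⟩
  rw [← sub_add_cancel s t, hadd]
  exact hball (by rw [Real.dist_0_eq_abs]; linarith) _ (mem_univ _)

theorem exists_quantizer {X : Type*} [PseudoMetricSpace X] [CompactSpace X] {r : ℝ}
    (hr : 0 < r) : ∃ (N : ℕ) (q : X → Fin N), ∀ y z, q y = q z → dist y z < r := by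
  obtain ⟨D, -, hD, hcov⟩ :=
    finite_cover_balls_of_compact (isCompact_univ (X := X)) (half_pos hr)
  have hnear : ∀ y : X, ∃ c : hD.toFinset, dist y c < r / 2 := fun y => by
    obtain ⟨c, hc, hyc⟩ := mem_iUnion₂.1 (hcov (mem_univ y))
    exact ⟨⟨c, hD.mem_toFinset.2 hc⟩, hyc⟩
  choose c hc using hnear
  refine ⟨_, fun y => Fintype.equivFin _ (c y), fun y z hyz => ?_⟩
  have hy := hc y
  rw [(Fintype.equivFin _).injective hyz] at hy
  calc dist y z ≤ dist y (c z) + dist z (c z) := dist_triangle_right _ _ _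
    _ < r := by linarith [hc z]

theorem card_mul_exp_le_of_sparse {ι B : Type*} [Fintype ι] [Fintype B] {s K : ℝ}
    (hs : 0 ≤ s) (C : Finset (ι → Option B)) (hC : ∀ c ∈ C, (#{i | c i ≠ none} : ℝ) ≤ K) :
    #C * Real.exp (-(s * K)) ≤ (1 + Fintype.card B * Real.exp (-s)) ^ Fintype.card ι := by
  classical
  -- `∑ c, ∏ i, w (c i) = (∑ v, w v) ^ |ι|`, and each `c ∈ C` contributes at least `exp (-s K)`
  let w : Option B → ℝ := fun v => if v ≠ none then Real.exp (-s) else 1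
  have hw : ∀ c : ι → Option B, ∏ i, w (c i) = Real.exp (-(s * #{i | c i ≠ none})) := by
    intro c
    rw [prod_ite, prod_const, prod_const_one, mul_one, ← Real.exp_nat_mul]
    ring_nf
  have hsum : ∑ v, w v = 1 + Fintype.card B * Real.exp (-s) := by
    simp [w, Fintype.sum_option]
  calc #C * Real.exp (-(s * K)) = ∑ _c ∈ C, Real.exp (-(s * K)) := by
        rw [sum_const, nsmul_eq_mul]
    _ ≤ ∑ c ∈ C, ∏ i, w (c i) := by
        refine sum_le_sum fun c hc => ?_
        rw [hw]
        exact Real.exp_le_exp.2 (neg_le_neg (mul_le_mul_of_nonneg_left (hC c hc) hs))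
    _ ≤ ∑ c : ι → Option B, ∏ i, w (c i) :=
        sum_le_univ_sum_of_nonneg fun c => prod_nonneg fun i _ => by positivity
    _ = (1 + Fintype.card B * Real.exp (-s)) ^ Fintype.card ι := by
        rw [← Fintype.prod_sum (fun _ => w), hsum, prod_const, card_univ]

theorem exists_card_le_exp_of_sparse (N : ℕ) {β : ℝ} (hβ : 0 < β) :
    ∃ κ > 0, ∀ (ι : Type*) [Fintype ι] (C : Finset (ι → Option (Fin N))),
      (∀ c ∈ C, (#{i | c i ≠ none} : ℝ) ≤ κ * Fintype.card ι) →
        (#C : ℝ) ≤ Real.exp (β * Fintype.card ι) := by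
  have hsmall : ∀ᶠ s in atTop, N * Real.exp (-s) < Real.exp (β / 2) - 1 := by
    have h := Real.tendsto_exp_neg_atTop_nhds_zero.const_mul (N : ℝ)
    rw [mul_zero] at h
    exact h.eventually (gt_mem_nhds (by simpa using half_pos hβ))
  obtain ⟨s, hs, hs0⟩ := (hsmall.and (eventually_gt_atTop 0)).exists
  refine ⟨β / (2 * s), by positivity, fun ι _ C hC => ?_⟩
  have key := card_mul_exp_le_of_sparse hs0.le C hC
  rw [Fintype.card_fin] at key
  have hbase :
      (1 + N * Real.exp (-s)) ^ Fintype.card ι ≤ Real.exp (β / 2 * Fintype.card ι) := by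
    rw [mul_comm (β / 2), Real.exp_nat_mul]
    exact pow_le_pow_left₀ (by positivity) (by linarith) _
  have hexp : s * (β / (2 * s) * Fintype.card ι) = β / 2 * Fintype.card ι := by
    field_simp
  rw [hexp] at key
  calc (#C : ℝ)
        = #C * Real.exp (-(β / 2 * Fintype.card ι)) * Real.exp (β / 2 * Fintype.card ι) := by
        rw [mul_assoc, ← Real.exp_add, neg_add_cancel, Real.exp_zero, mul_one]
    _ ≤ Real.exp (β / 2 * Fintype.card ι) * Real.exp (β / 2 * Fintype.card ι) := by
        gcongr
        exact key.trans hbase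
    _ = Real.exp (β * Fintype.card ι) := by rw [← Real.exp_add]; ring_nf

theorem exists_nat_pos_div_le_and_mul_le {L η : ℝ} (hL : 1 ≤ L) (hη : 0 < η) :
    ∃ m : ℕ, 0 < m ∧ L / m ≤ η ∧ m * η ≤ L * (1 + η) := by
  refine ⟨⌈L / η⌉₊, Nat.ceil_pos.2 (by positivity), ?_, ?_⟩
  · rw [div_le_iff₀ (by positivity), ← div_le_iff₀' hη]
    exact Nat.le_ceil _
  · calc (⌈L / η⌉₊ : ℝ) * η ≤ (L / η + 1) * η := by
          gcongr; exact (Nat.ceil_lt_add_one (by positivity)).le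
      _ = L + η := by field_simp
      _ ≤ L * (1 + η) := by nlinarith

theorem exists_mem_Icc_piece {a ℓ t : ℝ} {m : ℕ} (hℓ : 0 < ℓ) (hm : 0 < m)
    (ht : t ∈ Icc a (a + m * ℓ)) : ∃ i : Fin m, t ∈ Icc (a + i * ℓ) (a + (i + 1) * ℓ) := by
  have hq : 0 ≤ (t - a) / ℓ := div_nonneg (by linarith [ht.1]) hℓ.le
  let j := min ⌊(t - a) / ℓ⌋₊ (m - 1)
  refine ⟨⟨j, by omega⟩, ?_, ?_⟩
  · have : (j : ℝ) ≤ (t - a) / ℓ :=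
      (Nat.cast_le.2 (min_le_left _ _)).trans (Nat.floor_le hq)
    have := (le_div_iff₀ hℓ).1 this
    simp only
    linarith
  · rcases le_total ⌊(t - a) / ℓ⌋₊ (m - 1) with h | h
    · have : (t - a) / ℓ < j + 1 := by
        rw [show j = ⌊(t - a) / ℓ⌋₊ from min_eq_left h]; exact Nat.lt_floor_add_one _
      have := (div_lt_iff₀ hℓ).1 this
      simp only
      linarith
    · have : (j : ℝ) + 1 = m := by
        rw [show j = m - 1 from min_eq_right h]; norm_cast; omega
      simp only [this]
      exact ht.2

theorem card_mul_le_integral_of_le_on_pieces {f : ℝ → ℝ} (hf : Continuous f)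
    (hf0 : ∀ t, 0 ≤ f t) {a ℓ c : ℝ} (hℓ : 0 ≤ ℓ) {m : ℕ} (S : Finset (Fin m))
    (hS : ∀ i ∈ S, ∀ t ∈ Icc (a + i * ℓ) (a + (i + 1) * ℓ), c ≤ f t) :
    #S * (ℓ * c) ≤ ∫ t in Icc a (a + m * ℓ), f t := by
  let p : ℕ → ℝ := fun i => a + i * ℓ
  have hp : ∀ i : ℕ, p i ≤ p (i + 1) := fun i => by simp only [p]; push_cast; linarith
  have hsplit : ∑ i : Fin m, ∫ t in p i..p (i + 1), f t = ∫ t in Icc a (a + m * ℓ), f t := by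
    rw [Fin.sum_univ_eq_sum_range (fun i => ∫ t in p i..p (i + 1), f t),
      intervalIntegral.sum_integral_adjacent_intervals fun k _ => hf.intervalIntegrable _ _,
      integral_Icc_eq_integral_Ioc,
      ← intervalIntegral.integral_of_le (le_add_of_nonneg_right (by positivity))]
    simp [p]
  calc #S * (ℓ * c) = ∑ _i ∈ S, ℓ * c := by rw [sum_const, nsmul_eq_mul]
    _ ≤ ∑ i ∈ S, ∫ t in p i..p (i + 1), f t := by
        refine sum_le_sum fun i hi => ?_
        calc ℓ * c = ∫ _t in p i..p (i + 1), c := by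
              rw [intervalIntegral.integral_const, smul_eq_mul]; simp only [p]; push_cast; ring
          _ ≤ ∫ t in p i..p (i + 1), f t := intervalIntegral.integral_mono_on (hp i)
                intervalIntegrable_const (hf.intervalIntegrable _ _)
                fun t ht => hS i hi t (by simpa [p] using ht)
    _ ≤ ∑ i : Fin m, ∫ t in p i..p (i + 1), f t :=
        sum_le_univ_sum_of_nonneg fun i =>
          intervalIntegral.integral_nonneg (hp i) fun t _ => hf0 t
    _ = ∫ t in Icc a (a + m * ℓ), f t := hsplit

section OrbitCode

variable {X B : Type*} [PseudoMetricSpace X] (T : ℝ → X → X) (q : X → B) (δ a ℓ : ℝ) (m : ℕ)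
  (x : X)

open Classical in
noncomputable def orbitCode (y : X) (i : Fin m) : Option B :=
  if ∃ t ∈ Icc (a + i * ℓ) (a + (i + 1) * ℓ), δ / 4 ≤ dist (T t x) (T t y) then
    some (q (T (a + i * ℓ) y))
  else none

variable {T q δ a ℓ m x}

theorem le_dist_of_orbitCode_ne_none
    (hT : ∀ s t : ℝ, |s - t| ≤ ℓ → ∀ y, dist (T s y) (T t y) < δ / 16) {y : X} {i : Fin m}
    (hi : orbitCode T q δ a ℓ m x y i ≠ none) :
    ∀ s ∈ Icc (a + i * ℓ) (a + (i + 1) * ℓ), δ / 8 ≤ dist (T s x) (T s y) := by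
  intro s hs
  obtain ⟨t, ht, hfar⟩ :
      ∃ t ∈ Icc (a + i * ℓ) (a + (i + 1) * ℓ), δ / 4 ≤ dist (T t x) (T t y) := by
    by_contra h
    exact hi (if_neg h)
  have hst : |s - t| ≤ ℓ := abs_sub_le_iff.2 ⟨by linarith [hs.2, ht.1], by linarith [hs.1, ht.2]⟩
  linarith [dist_triangle4 (T t x) (T s x) (T s y) (T t y), dist_comm (T t x) (T s x),
    hT s t hst x, hT s t hst y]

theorem dist_lt_of_orbitCode_eq
    (hT : ∀ s t : ℝ, |s - t| ≤ ℓ → ∀ y, dist (T s y) (T t y) < δ / 16)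
    (hq : ∀ y z, q y = q z → dist y z < δ / 4) (hℓ : 0 < ℓ) (hm : 0 < m) {y z : X}
    (h : orbitCode T q δ a ℓ m x y = orbitCode T q δ a ℓ m x z) :
    ∀ t ∈ Icc a (a + m * ℓ), dist (T t y) (T t z) < δ / 2 := by
  intro t ht
  obtain ⟨i, hti⟩ := exists_mem_Icc_piece hℓ hm ht
  have hi := congrFun h i
  simp only [orbitCode] at hi
  split_ifs at hi with hy hz hz
  · have hp := hq _ _ (Option.some_injective _ hi)
    have hst : |t - (a + i * ℓ)| ≤ ℓ :=
      abs_sub_le_iff.2 ⟨by linarith [hti.2], by linarith [hti.1]⟩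
    linarith [dist_triangle4 (T t y) (T (a + i * ℓ) y) (T (a + i * ℓ) z) (T t z),
      dist_comm (T (a + i * ℓ) z) (T t z), hT _ _ hst y, hT _ _ hst z,
      dist_nonneg (x := T t y) (y := T (a + i * ℓ) y)]
  · push Not at hy hz
    linarith [dist_triangle_left (T t y) (T t z) (T t x), hy t hti, hz t hti]

theorem card_orbitCode_ne_none_mul_le_integral
    (hT : ∀ s t : ℝ, |s - t| ≤ ℓ → ∀ y, dist (T s y) (T t y) < δ / 16)
    (hTc : ∀ y, Continuous fun t => T t y) (hℓ : 0 ≤ ℓ) (y : X) :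
    #{i | orbitCode T q δ a ℓ m x y i ≠ none} * (ℓ * (δ / 8))
      ≤ ∫ t in Icc a (a + m * ℓ), dist (T t x) (T t y) :=
  card_mul_le_integral_of_le_on_pieces ((hTc x).dist (hTc y)) (fun _ => dist_nonneg) hℓ _
    fun _ hi => le_dist_of_orbitCode_ne_none hT (mem_filter.1 hi).2

theorem covN_integral_ball_le_exp {N : ℕ} (q : X → Fin N)
    (hT : ∀ s t : ℝ, |s - t| ≤ ℓ → ∀ y, dist (T s y) (T t y) < δ / 16)
    (hq : ∀ y z, q y = q z → dist y z < δ / 4) (hTc : ∀ y, Continuous fun t => T t y)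
    (hδ : 0 < δ) (hℓ : 0 < ℓ) (hm : 0 < m) {κ β : ℝ}
    (hcount : ∀ (ι : Type) [Fintype ι] (C : Finset (ι → Option (Fin N))),
      (∀ c ∈ C, (#{i | c i ≠ none} : ℝ) ≤ κ * Fintype.card ι) →
        (#C : ℝ) ≤ Real.exp (β * Fintype.card ι)) :
    (covN {y | ∫ t in Icc a (a + m * ℓ), dist (T t x) (T t y) < κ * (δ / 8) * (m * ℓ)}
        (fun y z => sSup ((fun t => dist (T t y) (T t z)) '' Icc a (a + m * ℓ))) δ : ℝ≥0∞)
      ≤ ENNReal.ofReal (Real.exp (β * m)) := by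
  classical
  set A := {y | ∫ t in Icc a (a + m * ℓ), dist (T t x) (T t y) < κ * (δ / 8) * (m * ℓ)}
  let C : Finset (Fin m → Option (Fin N)) := {c | (#{i | c i ≠ none} : ℝ) ≤ κ * m}
  have hC : ∀ y ∈ A, orbitCode T q δ a ℓ m x y ∈ C := by
    intro y hy
    have h := (card_orbitCode_ne_none_mul_le_integral (q := q) hT hTc hℓ.le y).trans_lt hy
    rw [show κ * (δ / 8) * (m * ℓ) = κ * m * (ℓ * (δ / 8)) by ring] at h
    exact mem_filter.2 ⟨mem_univ _, (lt_of_mul_lt_mul_right h (by positivity)).le⟩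
  have hcov : covN A (fun y z => sSup ((fun t => dist (T t y) (T t z)) '' Icc a (a + m * ℓ))) δ
      ≤ #C := by
    refine covN_le_card_of_map _ C hC fun y _ z _ hyz => ?_
    have hsup : sSup ((fun t => dist (T t y) (T t z)) '' Icc a (a + m * ℓ)) ≤ δ / 2 :=
      Real.sSup_le (by
          rintro _ ⟨t, ht, rfl⟩
          exact (dist_lt_of_orbitCode_eq hT hq hℓ hm hyz t ht).le) (by positivity)
    linarith
  have hcard := hcount (Fin m) C fun c hc => by simpa using (mem_filter.1 hc).2
  rw [Fintype.card_fin] at hcard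
  calc _ ≤ ((#C : ℕ∞) : ℝ≥0∞) := ENat.toENNReal_le.2 hcov
    _ = ENNReal.ofReal #C := by simp
    _ ≤ ENNReal.ofReal (Real.exp (β * m)) := ENNReal.ofReal_le_ofReal hcard

end OrbitCode

/-- **Bowen–Dinaburg balls inside Hamming-like balls for a flow.**
For a jointly continuous flow on a compact metric space, for every `ε, δ > 0` there is
`δ₁ > 0` such that every ball of radius `δ₁·Leb(K)` for the integrated metric `d_K` can
be covered by fewer than `exp(ε·Leb(K))` sets of `d^∞_K`-radius `δ`, for every compact
interval `K` of length at least `1`. -/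
theorem cov_dinf_of_ball_dint
    {X : Type*} [MetricSpace X] [CompactSpace X]
    (T : ℝ → X → X) (hcont : Continuous fun p : ℝ × X => T p.1 p.2)
    (h0 : ∀ x, T 0 x = x) (hadd : ∀ s t : ℝ, ∀ x, T (s + t) x = T s (T t x))
    (ε δ : ℝ) (hε : 0 < ε) (hδ : 0 < δ) :
    ∃ δ₁ : ℝ, 0 < δ₁ ∧ ∀ x : X, ∀ a b : ℝ, a ≤ b → 1 ≤ b - a →
      (covN {x' : X | (∫ t in Set.Icc a b, dist (T t x) (T t x')) < δ₁ * (b - a)}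
          (fun y z => sSup ((fun t => dist (T t y) (T t z)) '' Set.Icc a b)) δ : ℝ≥0∞)
        < ENNReal.ofReal (Real.exp (ε * (b - a))) := by
  obtain ⟨η, hη, hT⟩ :=
    exists_dist_lt_of_abs_sub_le hcont h0 hadd (by positivity : 0 < δ / 16)
  obtain ⟨N, q, hq⟩ := exists_quantizer (X := X) (by positivity : 0 < δ / 4)
  obtain ⟨κ, hκ, hcount⟩ :=
    exists_card_le_exp_of_sparse N (by positivity : 0 < ε * η / (2 * (1 + η)))
  refine ⟨κ * (δ / 8), by positivity, fun x a b _ hL => ?_⟩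
  obtain ⟨m, hm, hℓη, hmη⟩ := exists_nat_pos_div_le_and_mul_le hL hη
  have hmℓ : (m : ℝ) * ((b - a) / m) = b - a := mul_div_cancel₀ _ (by positivity)
  have hcov := covN_integral_ball_le_exp q (fun s t hst => hT s t (hst.trans hℓη)) hq
    (fun y => hcont.comp (continuous_id.prodMk continuous_const)) hδ
    (by positivity : 0 < (b - a) / m) hm hcount (a := a) (x := x)
  rw [hmℓ, add_sub_cancel] at hcov
  refine hcov.trans_lt
    ((ENNReal.ofReal_lt_ofReal_iff (Real.exp_pos _)).2 (Real.exp_lt_exp.2 ?_))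
  calc ε * η / (2 * (1 + η)) * m = ε * (m * η) / (2 * (1 + η)) := by ring
    _ ≤ ε * ((b - a) * (1 + η)) / (2 * (1 + η)) := by gcongr
    _ = ε * (b - a) / 2 := by field_simp
    _ < ε * (b - a) := by linarith [mul_pos hε (by linarith : 0 < b - a)]
end

section
/- Let A be a finite set, let Y ⊆ A^ℤ be a nonempty closed shift-invariant subset with shift map S, equipped with the metric d(y,y′) := ∑_{n∈ℤ} 2^{−|n|}·1[y_n ≠ y′_n], and let σ : Y → ℝ be Hölder continuous with respect to d. Then for every ε > 0 there is δ > 0 such that for all N ∈ ℕ and all y, y′ ∈ Y: if max_{n∈[0;N)} d(S^n y, S^n y′) < δ, then max_{n∈[0;N)} |σ^y_n − σ^{y′}_n| < ε. -/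
/-!
If the orbits of `y` and `y'` stay `2^{-L}`-close up to time `N`, then `y` and `y'` agree on the
whole window `[-L, N + L)`. Hence at each time `m < N` the points `S^m y` and `S^m y'` agree on
`[-(L + m), L + (N - 1 - m)]`, so their distance is at most `2^{-(L+N-1-m)} + 2^{-(L+m)}`.
Since `θ ≤ 1`, Hölder continuity turns this into `|c| q^L (q^{N-1-m} + q^m)` with `q = 2^{-θ} < 1`,
and summing the two geometric series bounds `|σ^y_n - σ^{y'}_n|` by `2 |c| q^L / (1 - q)`,
which is below `ε` once `L` is large.
-/

open scoped Classical

/-- The standard metric on `A^ℤ`: `d(y,y′) := ∑_{n∈ℤ} 2^{−|n|}·1[y_n ≠ y′_n]`. -/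
noncomputable def shiftDist {A : Type*} (y y' : ℤ → A) : ℝ :=
  ∑' n : ℤ, if y n ≠ y' n then (2 : ℝ) ^ (-|n|) else 0

/-- The (leftward) shift on `A^ℤ`. -/
def shiftMap {A : Type*} (y : ℤ → A) : ℤ → A := fun n => y (n + 1)

/-- Cocycle partial sums `σ^y_n := ∑_{m=0}^{n−1} σ(S^m y)` for `n : ℕ`. -/
noncomputable def cocSum {A : Type*} (σ : (ℤ → A) → ℝ) (y : ℤ → A) (n : ℕ) : ℝ :=
  ∑ m ∈ Finset.range n, σ (shiftMap^[m] y)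

open Finset

section ShiftDist

variable {A : Type*} {y y' : ℤ → A}

lemma two_zpow_neg_abs_eq {k : ℤ} {n : ℕ} (hk : |k| = n + 1) :
    (2 : ℝ) ^ (-|k|) = 2⁻¹ ^ (n + 1) := by
  rw [hk, zpow_neg, ← inv_zpow, ← Nat.cast_succ, zpow_natCast]

lemma abs_natCast_add_one (n : ℕ) : |(n + 1 : ℤ)| = n + 1 := abs_of_nonneg (by positivity)

lemma abs_neg_natCast_add_one (n : ℕ) : |-(n + 1 : ℤ)| = n + 1 := by
  rw [abs_neg, abs_natCast_add_one]

lemma summable_inv_two_pow_succ : Summable fun n : ℕ => (2 : ℝ)⁻¹ ^ (n + 1) :=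
  (summable_nat_add_iff 1).2 (summable_geometric_of_lt_one (by norm_num) (by norm_num))

lemma summable_two_zpow_neg_abs : Summable fun n : ℤ => (2 : ℝ) ^ (-|n|) :=
  .of_add_one_of_neg_add_one
    (summable_inv_two_pow_succ.congr fun n => (two_zpow_neg_abs_eq (abs_natCast_add_one n)).symm)
    (summable_inv_two_pow_succ.congr fun n =>
      (two_zpow_neg_abs_eq (abs_neg_natCast_add_one n)).symm)

lemma shiftDist_summand_nonneg (y y' : ℤ → A) (n : ℤ) :
    0 ≤ if y n ≠ y' n then (2 : ℝ) ^ (-|n|) else 0 := by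
  split_ifs <;> positivity

lemma summable_shiftDist (y y' : ℤ → A) :
    Summable fun n : ℤ => if y n ≠ y' n then (2 : ℝ) ^ (-|n|) else 0 :=
  .of_nonneg_of_le (shiftDist_summand_nonneg y y') (fun n => by split_ifs <;> simp [zpow_nonneg])
    summable_two_zpow_neg_abs

lemma shiftDist_nonneg (y y' : ℤ → A) : 0 ≤ shiftDist y y' :=
  tsum_nonneg (shiftDist_summand_nonneg y y')

lemma two_zpow_neg_abs_le_shiftDist {k : ℤ} (h : y k ≠ y' k) :
    (2 : ℝ) ^ (-|k|) ≤ shiftDist y y' := by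
  simpa [shiftDist, h] using
    (summable_shiftDist y y').le_tsum k fun j _ => shiftDist_summand_nonneg y y' j

lemma eq_of_shiftDist_lt {r : ℕ} (h : shiftDist y y' < (2 : ℝ) ^ (-(r : ℤ))) {k : ℤ}
    (hk : |k| ≤ r) : y k = y' k := by
  by_contra hne
  have : (2 : ℝ) ^ (-(r : ℤ)) ≤ 2 ^ (-|k|) := zpow_le_zpow_right₀ one_le_two (by omega)
  linarith [two_zpow_neg_abs_le_shiftDist hne]

lemma tsum_le_inv_two_pow_of_le_ite {f : ℕ → ℝ} (hf : Summable f) {r : ℕ}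
    (h : ∀ n, f n ≤ if r ≤ n then 2⁻¹ ^ (n + 1) else 0) : ∑' n, f n ≤ 2⁻¹ ^ r := by
  have hite (n : ℕ) :
      (if r ≤ n then (2 : ℝ)⁻¹ ^ (n + 1) else 0) = 2⁻¹ * if r ≤ n then 2⁻¹ ^ n else 0 := by
    split_ifs <;> ring
  have hsum : Summable fun n => if r ≤ n then (2 : ℝ)⁻¹ ^ (n + 1) else 0 :=
    .of_nonneg_of_le (fun n => by split_ifs <;> positivity)
      (fun n => by split_ifs <;> simp) summable_inv_two_pow_succ
  calc ∑' n, f n ≤ ∑' n, if r ≤ n then (2 : ℝ)⁻¹ ^ (n + 1) else 0 := hf.tsum_le_tsum h hsum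
    _ = 2⁻¹ ^ r := by
      simp only [hite, tsum_mul_left, tsum_geometric_inv_two_ge]
      ring

lemma shiftDist_summand_le_ite {k : ℤ} {n r : ℕ} (hk : |k| = n + 1)
    (h : n < r → y k = y' k) :
    (if y k ≠ y' k then (2 : ℝ) ^ (-|k|) else 0) ≤ if r ≤ n then 2⁻¹ ^ (n + 1) else 0 := by
  rw [two_zpow_neg_abs_eq hk]
  by_cases hn : r ≤ n
  · split_ifs <;> simp
  · simp [hn, h (not_le.1 hn)]

lemma shiftDist_le_of_eqOn_Icc {a b : ℕ} (h : Set.EqOn y y' (Set.Icc (-(a : ℤ)) b)) :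
    shiftDist y y' ≤ 2⁻¹ ^ b + 2⁻¹ ^ a := by
  set f : ℤ → ℝ := fun k => if y k ≠ y' k then (2 : ℝ) ^ (-|k|) else 0
  have hpos : Summable fun n : ℕ => f (n + 1) :=
    (summable_shiftDist y y').comp_injective (i := fun n : ℕ => (n + 1 : ℤ)) (by intro m n; simp)
  have hneg : Summable fun n : ℕ => f (-(n + 1)) :=
    (summable_shiftDist y y').comp_injective (i := fun n : ℕ => -(n + 1 : ℤ)) (by intro m n; simp)
  have h0 : f 0 = 0 := if_neg (not_not.2 (h ⟨by simp, by simp⟩))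
  rw [shiftDist, tsum_of_add_one_of_neg_add_one hpos hneg, h0, add_zero]
  exact add_le_add
    (tsum_le_inv_two_pow_of_le_ite hpos fun n =>
      shiftDist_summand_le_ite (abs_natCast_add_one n) fun hn => h ⟨by omega, by omega⟩)
    (tsum_le_inv_two_pow_of_le_ite hneg fun n =>
      shiftDist_summand_le_ite (abs_neg_natCast_add_one n) fun hn => h ⟨by omega, by omega⟩)

end ShiftDist

section Orbit

variable {A : Type*} {y y' : ℤ → A}

lemma shiftMap_iterate_apply (y : ℤ → A) (m : ℕ) (j : ℤ) : shiftMap^[m] y j = y (j + m) := by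
  induction m generalizing j with
  | zero => simp
  | succ m ih =>
    rw [Function.iterate_succ_apply']
    show shiftMap^[m] y (j + 1) = _
    rw [ih]
    push_cast
    ring_nf

lemma eqOn_Ico_of_forall_shiftDist_iterate_lt {N L : ℕ} (hN : 0 < N)
    (h : ∀ n ∈ range N, shiftDist (shiftMap^[n] y) (shiftMap^[n] y') < 2 ^ (-(L : ℤ))) :
    Set.EqOn y y' (Set.Ico (-(L : ℤ)) (N + L)) := by
  rintro k ⟨hk₁, hk₂⟩
  -- the time `m` closest to `k` sees position `k` at distance at most `L` from its origin
  set m := (min k (N - 1)).toNat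
  have hm : m ∈ range N := by rw [mem_range]; omega
  simpa [shiftMap_iterate_apply] using
    eq_of_shiftDist_lt (h m hm) (k := k - m) (by rw [abs_le]; omega)

lemma shiftDist_iterate_le_of_forall_lt {N L : ℕ}
    (h : ∀ n ∈ range N, shiftDist (shiftMap^[n] y) (shiftMap^[n] y') < 2 ^ (-(L : ℤ)))
    {m : ℕ} (hm : m ∈ range N) :
    shiftDist (shiftMap^[m] y) (shiftMap^[m] y') ≤ 2⁻¹ ^ (L + (N - 1 - m)) + 2⁻¹ ^ (L + m) := by
  rw [mem_range] at hm
  refine shiftDist_le_of_eqOn_Icc fun k ⟨hk₁, hk₂⟩ => ?_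
  simp only [shiftMap_iterate_apply]
  exact eqOn_Ico_of_forall_shiftDist_iterate_lt (by omega) h ⟨by omega, by omega⟩

end Orbit

lemma Real.rpow_le_pow_add_pow {x t θ : ℝ} {a b : ℕ} (hx : 0 ≤ x) (ht : 0 ≤ t) (hθ₀ : 0 ≤ θ)
    (hθ₁ : θ ≤ 1) (h : x ≤ t ^ a + t ^ b) : x ^ θ ≤ (t ^ θ) ^ a + (t ^ θ) ^ b := by
  rw [Real.rpow_pow_comm ht, Real.rpow_pow_comm ht]
  calc x ^ θ ≤ (t ^ a + t ^ b) ^ θ := Real.rpow_le_rpow hx h hθ₀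
    _ ≤ (t ^ a) ^ θ + (t ^ b) ^ θ :=
      Real.rpow_add_le_add_rpow (by positivity) (by positivity) hθ₀ hθ₁

lemma sum_range_pow_sub_add_pow_le {q : ℝ} (hq₀ : 0 ≤ q) (hq₁ : q < 1) (N : ℕ) :
    ∑ m ∈ range N, (q ^ (N - 1 - m) + q ^ m) ≤ 2 / (1 - q) := by
  have hgeom := geom_sum_Ico_le_of_lt_one (m := 0) (n := N) hq₀ hq₁
  rw [← range_eq_Ico, pow_zero] at hgeom
  rw [sum_add_distrib, sum_range_reflect (fun m => q ^ m) N]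
  calc _ ≤ 1 / (1 - q) + 1 / (1 - q) := add_le_add hgeom hgeom
    _ = 2 / (1 - q) := by ring

lemma abs_cocSum_sub_le {A : Type*} {σ : (ℤ → A) → ℝ} {y y' : ℤ → A} {N n : ℕ} {B : ℕ → ℝ}
    (hB : ∀ m ∈ range N, |σ (shiftMap^[m] y) - σ (shiftMap^[m] y')| ≤ B m) (hn : n ≤ N) :
    |cocSum σ y n - cocSum σ y' n| ≤ ∑ m ∈ range N, B m := by
  rw [cocSum, cocSum, ← sum_sub_distrib]
  calc |∑ m ∈ range n, (σ (shiftMap^[m] y) - σ (shiftMap^[m] y'))|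
      ≤ ∑ m ∈ range n, |σ (shiftMap^[m] y) - σ (shiftMap^[m] y')| := abs_sum_le_sum_abs _ _
    _ ≤ ∑ m ∈ range n, B m :=
      sum_le_sum fun m hm => hB m (range_subset_range.2 hn hm)
    _ ≤ ∑ m ∈ range N, B m :=
      sum_le_sum_of_subset_of_nonneg (range_subset_range.2 hn)
        fun m hm _ => (abs_nonneg _).trans (hB m hm)

theorem holder_cocycle_close_on_close_orbits_general
    {A : Type*}
    (Y : Set (ℤ → A))
    (hYinv : shiftMap '' Y = Y)
    (σ : (ℤ → A) → ℝ)
    (hHolder : ∃ c : ℝ, ∃ θ : ℝ, 0 < θ ∧ θ ≤ 1 ∧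
      ∀ y ∈ Y, ∀ y' ∈ Y, |σ y - σ y'| ≤ c * (shiftDist y y') ^ θ) :
    ∀ ε : ℝ, 0 < ε → ∃ δ : ℝ, 0 < δ ∧ ∀ N : ℕ, ∀ y ∈ Y, ∀ y' ∈ Y,
      (∀ n ∈ Finset.range N, shiftDist (shiftMap^[n] y) (shiftMap^[n] y') < δ) →
      ∀ n ∈ Finset.range N, |cocSum σ y n - cocSum σ y' n| < ε := by
  obtain ⟨c, θ, hθ₀, hθ₁, hσ⟩ := hHolder
  intro ε hε
  set q : ℝ := 2⁻¹ ^ θ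
  have hq₀ : 0 ≤ q := by positivity
  have hq₁ : q < 1 := Real.rpow_lt_one (by norm_num) (by norm_num) hθ₀
  have hY : Set.MapsTo shiftMap Y Y := Set.mapsTo_iff_image_subset.2 hYinv.subset
  obtain ⟨L, hL⟩ := (((tendsto_pow_atTop_nhds_zero_of_lt_one hq₀ hq₁).const_mul
    (|c| * (2 / (1 - q)))).eventually (gt_mem_nhds (by simpa using hε))).exists
  refine ⟨2 ^ (-(L : ℤ)), by positivity, fun N y hy y' hy' hclose n hn => ?_⟩
  have hterm : ∀ m ∈ range N, |σ (shiftMap^[m] y) - σ (shiftMap^[m] y')| ≤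
      |c| * q ^ L * (q ^ (N - 1 - m) + q ^ m) := fun m hm => calc
    _ ≤ c * shiftDist (shiftMap^[m] y) (shiftMap^[m] y') ^ θ :=
      hσ _ (hY.iterate m hy) _ (hY.iterate m hy')
    _ ≤ |c| * (q ^ (L + (N - 1 - m)) + q ^ (L + m)) :=
      mul_le_mul (le_abs_self c) (Real.rpow_le_pow_add_pow (shiftDist_nonneg _ _) (by norm_num)
        hθ₀.le hθ₁ (shiftDist_iterate_le_of_forall_lt hclose hm))
        (Real.rpow_nonneg (shiftDist_nonneg _ _) θ) (abs_nonneg c)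
    _ = |c| * q ^ L * (q ^ (N - 1 - m) + q ^ m) := by ring
  calc |cocSum σ y n - cocSum σ y' n|
      ≤ |c| * q ^ L * ∑ m ∈ range N, (q ^ (N - 1 - m) + q ^ m) := by
        rw [mul_sum]; exact abs_cocSum_sub_le hterm (mem_range.1 hn).le
    _ ≤ |c| * q ^ L * (2 / (1 - q)) := by gcongr; exact sum_range_pow_sub_add_pow_le hq₀ hq₁ N
    _ < ε := by linarith

/-- **Hölder cocycles over subshifts are uniformly controlled by orbit-proximity**:
if `σ` is Hölder for the metric `d` on a closed shift-invariant `Y ⊆ A^ℤ`, then for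
every `ε > 0` there is `δ > 0` such that whenever the orbits of two points of `Y` stay
`δ`-close up to time `N`, all their cocycle partial sums up to time `N` differ by less
than `ε`. -/
theorem holder_cocycle_close_on_close_orbits
    {A : Type*} [Finite A] [TopologicalSpace A] [DiscreteTopology A]
    (Y : Set (ℤ → A)) (hYne : Y.Nonempty) (hYclosed : IsClosed Y)
    (hYinv : shiftMap '' Y = Y)
    (σ : (ℤ → A) → ℝ)
    (hHolder : ∃ c : ℝ, ∃ θ : ℝ, 0 < θ ∧ θ ≤ 1 ∧
      ∀ y ∈ Y, ∀ y' ∈ Y, |σ y - σ y'| ≤ c * (shiftDist y y') ^ θ) :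
    ∀ ε : ℝ, 0 < ε → ∃ δ : ℝ, 0 < δ ∧ ∀ N : ℕ, ∀ y ∈ Y, ∀ y' ∈ Y,
      (∀ n ∈ Finset.range N, shiftDist (shiftMap^[n] y) (shiftMap^[n] y') < δ) →
      ∀ n ∈ Finset.range N, |cocSum σ y n - cocSum σ y' n| < ε :=
  holder_cocycle_close_on_close_orbits_general Y hYinv σ hHolder
end

section
/- Let K ⊆ ℝ be a compact interval with length L := Leb(K), let d ∈ ℕ, let D₁ ≥ D₂ ≥ … ≥ D_d > 0, and suppose 0 < δ ≤ min{D_d/10, L/10}. Then cov( (DCS_{d,D}(K), d_DCS), δ ) ≤ (2L/δ)·(2D₁/δ)·(2D₂/δ)²·(2D₃/δ)⁴·…·(2D_d/δ)^{2^{d−1}}. -/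
open scoped ENNReal

/-- The set `DCS_{d,D}(K)` of discrete Cantor sets of depth `d` contained in
`K = [a,b]` with gap upper bounds `D`. -/
def DCSset (a b : ℝ) (d : ℕ) (D : Fin d → ℝ) : Set ((Fin d → Bool) → ℝ) :=
  {x | (∀ ω, x ω ∈ Set.Icc a b) ∧
    ∀ (i : ℕ) (hi : i < d), ∀ ω ω' : Fin d → Bool,
      (∀ j : Fin d, (j : ℕ) < i → ω j = ω' j) → |x ω - x ω'| ≤ D ⟨i, hi⟩}

/-- The sup metric on families indexed by `{0,1}^d`. -/
noncomputable def dDCS {d : ℕ} (x y : (Fin d → Bool) → ℝ) : ℝ :=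
  Finset.univ.sup' Finset.univ_nonempty (fun ω : Fin d → Bool => |x ω - y ω|)

/-!
Round every point of a Cantor set `x` down to the grid `a + Gℤ`, `G = 3δ/2`. The integer labels
`m ω` are recovered by telescoping from the label of the all-`false` word and, for each `k` and
each word `u` of length `k`, the jump of `m` when the letter after `u` is switched on; that jump
is at most `⌊D_k / G⌋ + 1` in size because the two words agree below `k`. This gives at most
`(2L/δ) ∏ₖ (2Dₖ/δ)^(2^k)` labels.

To turn grid points into centres inside `DCS`, note that `DCS` is the set of `[a, b]`-valued maps
that are `1`-Lipschitz for the ultrametric `ρ(ω, σ) = D_(first index where ω, σ differ)`. Clamping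
into `[a, b]` followed by McShane's inf-convolution `y ↦ (ω ↦ min_σ (y σ + ρ ω σ))` is a
retraction onto this set that is nonexpansive for the sup metric, so the grid point of `x`, at
distance `≤ G/2` from `x`, retracts to a centre at distance `≤ G/2 < δ` from `x`. Picking centres
from the grid cells instead would force `G ≤ δ` and lose the constant `2`.
-/

open Finset

theorem covN_le_card {X ι : Type*} {A : Set X} {ρ : X → X → ℝ} {δ : ℝ} (s : Finset ι)
    (c : ι → X) (hcA : ∀ i ∈ s, c i ∈ A) (hcov : ∀ x ∈ A, ∃ i ∈ s, ρ (c i) x < δ) :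
    covN A ρ δ ≤ #s := by
  classical
  calc covN A ρ δ ≤ #(s.image c) :=
        sInf_le ⟨s.image c, by simpa [Set.subset_def] using hcA, rfl, by simpa using hcov⟩
    _ ≤ #s := mod_cast card_image_le

section InfConvolution

variable {ι : Type*} {c : ι → ι → ℝ}

noncomputable def infConv (c : ι → ι → ℝ) (y : ι → ℝ) (i : ι) : ℝ := ⨅ j, y j + c i j

theorem infConv_le [Finite ι] (y : ι → ℝ) (i j : ι) : infConv c y i ≤ y j + c i j :=
  ciInf_le (Set.finite_range _).bddBelow j

theorem le_infConv [Nonempty ι] {y : ι → ℝ} {i : ι} {t : ℝ} (h : ∀ j, t ≤ y j + c i j) :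
    t ≤ infConv c y i :=
  le_ciInf h

variable [Finite ι] [Nonempty ι]

theorem infConv_le_infConv_add (htri : ∀ i j k, c i k ≤ c i j + c j k) (y : ι → ℝ)
    (i j : ι) : infConv c y i ≤ infConv c y j + c i j := by
  rw [← sub_le_iff_le_add]
  exact le_infConv fun k => by linarith [infConv_le (c := c) y i k, htri i j k]

theorem infConv_le_infConv_of_le_add {y z : ι → ℝ} {t : ℝ} (h : ∀ j, y j ≤ z j + t) (i : ι) :
    infConv c y i ≤ infConv c z i + t := by
  rw [← sub_le_iff_le_add]
  exact le_infConv fun j => by linarith [infConv_le (c := c) y i j, h j]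

theorem abs_infConv_sub_infConv_le {y z : ι → ℝ} {t : ℝ} (h : ∀ j, |y j - z j| ≤ t) (i : ι) :
    |infConv c y i - infConv c z i| ≤ t := by
  rw [abs_sub_le_iff, sub_le_iff_le_add', sub_le_iff_le_add']
  refine ⟨infConv_le_infConv_of_le_add (fun j => ?_) i,
    infConv_le_infConv_of_le_add (fun j => ?_) i⟩
  · linarith [(abs_le.mp (h j)).2]
  · linarith [(abs_le.mp (h j)).1]

theorem infConv_eq_self (hc : ∀ i, c i i = 0) {x : ι → ℝ} (hx : ∀ i j, x i ≤ x j + c i j) :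
    infConv c x = x :=
  funext fun i => le_antisymm (by simpa [hc] using infConv_le (c := c) x i i) (le_infConv (hx i))

theorem infConv_mem_Icc {a b : ℝ} (hc0 : ∀ i j, 0 ≤ c i j) (hc : ∀ i, c i i = 0)
    {y : ι → ℝ} (hy : ∀ j, y j ∈ Set.Icc a b) (i : ι) : infConv c y i ∈ Set.Icc a b :=
  ⟨le_infConv fun j => by linarith [(hy j).1, hc0 i j],
    (infConv_le y i i).trans (by simpa [hc] using (hy i).2)⟩

def lipschitzIcc (a b : ℝ) (c : ι → ι → ℝ) : Set (ι → ℝ) :=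
  {x | (∀ i, x i ∈ Set.Icc a b) ∧ ∀ i j, x i ≤ x j + c i j}

noncomputable def lipRetract {a b : ℝ} (hab : a ≤ b) (c : ι → ι → ℝ) (y : ι → ℝ) : ι → ℝ :=
  infConv c fun j => (Set.projIcc a b hab (y j) : ℝ)

variable {a b : ℝ}

theorem lipRetract_mem (hab : a ≤ b) (hc0 : ∀ i j, 0 ≤ c i j) (hc : ∀ i, c i i = 0)
    (htri : ∀ i j k, c i k ≤ c i j + c j k) (y : ι → ℝ) :
    lipRetract hab c y ∈ lipschitzIcc a b c :=
  ⟨infConv_mem_Icc hc0 hc fun _ => Subtype.prop _, infConv_le_infConv_add htri _⟩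

theorem lipRetract_eq_self (hab : a ≤ b) (hc : ∀ i, c i i = 0) {x : ι → ℝ}
    (hx : x ∈ lipschitzIcc a b c) : lipRetract hab c x = x := by
  have hproj : (fun j => (Set.projIcc a b hab (x j) : ℝ)) = x :=
    funext fun j => by simp [Set.projIcc_of_mem hab (hx.1 j)]
  rw [lipRetract, hproj, infConv_eq_self hc hx.2]

theorem abs_lipRetract_sub_le (hab : a ≤ b) {y z : ι → ℝ} {t : ℝ} (h : ∀ j, |y j - z j| ≤ t)
    (i : ι) : |lipRetract hab c y i - lipRetract hab c z i| ≤ t :=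
  abs_infConv_sub_infConv_le (fun j => (Set.abs_projIcc_sub_projIcc hab).trans (h j)) i

end InfConvolution

section WordDist

variable {d : ℕ} {D : Fin d → ℝ}

/-- For antitone `D` this is `D` at the first index where `ω` and `σ` differ. -/
noncomputable def wordDist (D : Fin d → ℝ) (ω σ : Fin d → Bool) : ℝ :=
  ⨆ i, if ω i = σ i then 0 else D i

theorem wordDist_self (ω : Fin d → Bool) : wordDist D ω ω = 0 := by
  simp [wordDist]

theorem le_wordDist {ω σ : Fin d → Bool} {i : Fin d} (h : ω i ≠ σ i) : D i ≤ wordDist D ω σ :=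
  (if_neg h).symm.le.trans
    (le_ciSup (f := fun i => if ω i = σ i then (0 : ℝ) else D i) (Set.finite_range _).bddAbove i)

theorem wordDist_nonneg (hD0 : ∀ i, 0 ≤ D i) (ω σ : Fin d → Bool) : 0 ≤ wordDist D ω σ :=
  Real.iSup_nonneg fun i => by split_ifs <;> simp [hD0]

theorem wordDist_le_add (hD0 : ∀ i, 0 ≤ D i) (ω τ σ : Fin d → Bool) :
    wordDist D ω σ ≤ wordDist D ω τ + wordDist D τ σ := by
  have h₁ := wordDist_nonneg hD0 ω τ
  have h₂ := wordDist_nonneg hD0 τ σ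
  refine Real.iSup_le (fun i => ?_) (add_nonneg h₁ h₂)
  split_ifs with h
  · exact add_nonneg h₁ h₂
  · by_cases h' : ω i = τ i
    · linarith [le_wordDist (D := D) (show τ i ≠ σ i from h' ▸ h)]
    · linarith [le_wordDist (D := D) h']

theorem wordDist_le_of_agree (hD : Antitone D) (hD0 : ∀ i, 0 ≤ D i) {ω σ : Fin d → Bool}
    {i : Fin d} (h : ∀ j < i, ω j = σ j) : wordDist D ω σ ≤ D i := by
  refine Real.iSup_le (fun j => ?_) (hD0 i)
  split_ifs with hj
  · exact hD0 i
  · exact hD (not_lt.mp fun hji => hj (h j hji))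

theorem abs_sub_le_wordDist_of_mem {a b : ℝ} {x : (Fin d → Bool) → ℝ}
    (hx : x ∈ DCSset a b d D) (ω σ : Fin d → Bool) : |x ω - x σ| ≤ wordDist D ω σ := by
  by_cases hωσ : ω = σ
  · simp [hωσ, wordDist_self]
  obtain ⟨i, hi, hmin⟩ :=
    WellFounded.has_min wellFounded_lt {i | ω i ≠ σ i} (Function.ne_iff.mp hωσ)
  exact (hx.2 i i.isLt ω σ fun j hj => not_not.mp fun h => hmin j h hj).trans (le_wordDist hi)

theorem DCSset_eq_lipschitzIcc (hD : Antitone D) (hD0 : ∀ i, 0 ≤ D i) (a b : ℝ) :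
    DCSset a b d D = lipschitzIcc a b (wordDist D) := by
  ext x
  refine ⟨fun hx => ⟨hx.1, fun ω σ => ?_⟩, fun hx => ⟨hx.1, fun i hi ω σ hag => ?_⟩⟩
  · linarith [(abs_le.mp (abs_sub_le_wordDist_of_mem hx ω σ)).2]
  · have h₁ := wordDist_le_of_agree hD hD0 (i := ⟨i, hi⟩) fun j hj => hag j hj
    have h₂ := wordDist_le_of_agree hD hD0 (i := ⟨i, hi⟩) fun j hj => (hag j hj).symm
    rw [abs_sub_le_iff]
    constructor <;> linarith [hx.2 ω σ, hx.2 σ ω]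

end WordDist

section Increments

variable {d : ℕ}

def extendWord (k : Fin d) (u : Fin k → Bool) (b : Bool) : Fin d → Bool :=
  fun i => if h : (i : ℕ) < k then u ⟨i, h⟩ else if i = k then b else false

def truncWord (n : ℕ) (ω : Fin d → Bool) : Fin d → Bool :=
  fun i => if (i : ℕ) < n then ω i else false

theorem extendWord_apply_of_lt (k : Fin d) (u : Fin k → Bool) (b b' : Bool) {j : Fin d}
    (hj : (j : ℕ) < k) : extendWord k u b j = extendWord k u b' j := by
  simp [extendWord, hj]

theorem extendWord_take_false (k : Fin d) (ω : Fin d → Bool) :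
    extendWord k (Fin.take k k.isLt.le ω) false = truncWord k ω := by
  funext i
  by_cases hi : (i : ℕ) < k <;> simp [extendWord, truncWord, hi, Fin.take_apply]

theorem extendWord_take_self (k : Fin d) (ω : Fin d → Bool) :
    extendWord k (Fin.take k k.isLt.le ω) (ω k) = truncWord (k + 1) ω := by
  funext i
  rcases lt_trichotomy i k with hi | rfl | hi
  · simp [extendWord, truncWord, hi, Nat.lt_succ_of_lt hi, Fin.take_apply]
  · simp [extendWord, truncWord]
  · simp [extendWord, truncWord, hi.ne', not_lt.mpr hi.le, not_le.mpr hi]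

variable {M : Type*} [AddCommGroup M]

def increments (m : (Fin d → Bool) → M) : M × ((k : Fin d) → (Fin k → Bool) → M) :=
  (m fun _ => false, fun k u => m (extendWord k u true) - m (extendWord k u false))

def assemble (p : M × ((k : Fin d) → (Fin k → Bool) → M)) (ω : Fin d → Bool) : M :=
  p.1 + ∑ k, if ω k then p.2 k (Fin.take k k.isLt.le ω) else 0

theorem assemble_increments (m : (Fin d → Bool) → M) : assemble (increments m) = m := by
  funext ω
  have hstep : ∀ k : Fin d, (if ω k then (increments m).2 k (Fin.take k k.isLt.le ω) else 0)
      = m (truncWord (k + 1) ω) - m (truncWord k ω) := by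
    intro k
    rw [← extendWord_take_self, ← extendWord_take_false]
    cases ω k <;> simp [increments]
  have htop : truncWord d ω = ω := funext fun i => by simp [truncWord]
  have hbot : truncWord 0 ω = fun _ => false := funext fun i => by simp [truncWord]
  simp only [assemble, sum_congr rfl fun k _ => hstep k]
  rw [Fin.sum_univ_eq_sum_range (fun i => m (truncWord (i + 1) ω) - m (truncWord i ω)),
    sum_range_sub (fun i => m (truncWord i ω)), htop, hbot]
  simp [increments]

end Increments

section Grid

theorem floor_sub_floor_le_floor_add_one {K : Type*} [Field K] [LinearOrder K]
    [IsStrictOrderedRing K] [FloorRing K] {u v r : K} (h : u - v ≤ r) :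
    ⌊u⌋ - ⌊v⌋ ≤ ⌊r⌋ + 1 := by
  have hlt : ((⌊u⌋ - ⌊v⌋ : ℤ) : K) < (⌊r⌋ + 2 : ℤ) := by
    push_cast
    linarith [Int.floor_le u, Int.lt_floor_add_one v, Int.lt_floor_add_one r]
  have := Int.cast_lt.mp hlt
  omega

variable {a G : ℝ}

noncomputable def gridIndex (a G t : ℝ) : ℤ := ⌊(t - a) / G⌋

noncomputable def gridPoint (a G : ℝ) (n : ℤ) : ℝ := a + G * n + G / 2

theorem abs_gridPoint_gridIndex_sub_le (hG : 0 < G) (t : ℝ) :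
    |gridPoint a G (gridIndex a G t) - t| ≤ G / 2 := by
  have h₁ : G * ⌊(t - a) / G⌋ ≤ t - a := by
    rw [mul_comm, ← le_div_iff₀ hG]; exact Int.floor_le _
  have h₂ : t - a < G * (⌊(t - a) / G⌋ + 1) := by
    rw [mul_comm, ← div_lt_iff₀ hG]; exact Int.lt_floor_add_one _
  rw [gridPoint, gridIndex, abs_le]
  constructor <;> linarith

theorem gridIndex_mem_Icc (hG : 0 < G) {b t : ℝ} (ht : t ∈ Set.Icc a b) :
    gridIndex a G t ∈ Icc 0 (gridIndex a G b) :=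
  mem_Icc.mpr ⟨Int.floor_nonneg.mpr (div_nonneg (by linarith [ht.1]) hG.le),
    Int.floor_le_floor (div_le_div_of_nonneg_right (by linarith [ht.2]) hG.le)⟩

theorem abs_gridIndex_sub_le (hG : 0 < G) {s t r : ℝ} (h : |s - t| ≤ r) :
    |gridIndex a G s - gridIndex a G t| ≤ ⌊r / G⌋ + 1 := by
  have hdiv : |(s - a) / G - (t - a) / G| ≤ r / G := by
    rw [← sub_div, sub_sub_sub_cancel_right, abs_div, abs_of_pos hG]
    exact div_le_div_of_nonneg_right h hG.le
  rw [abs_le] at hdiv ⊢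
  have h₁ := floor_sub_floor_le_floor_add_one (show (s - a) / G - (t - a) / G ≤ r / G by linarith)
  have h₂ := floor_sub_floor_le_floor_add_one (show (t - a) / G - (s - a) / G ≤ r / G by linarith)
  exact ⟨by simp only [gridIndex]; linarith, h₁⟩

theorem abs_lipRetract_gridPoint_sub_le {ι : Type*} [Finite ι] [Nonempty ι] {c : ι → ι → ℝ}
    {b : ℝ} (hab : a ≤ b) (hG : 0 < G) (hc : ∀ i, c i i = 0) {x : ι → ℝ}
    (hx : x ∈ lipschitzIcc a b c) (i : ι) :
    |lipRetract hab c (fun j => gridPoint a G (gridIndex a G (x j))) i - x i| ≤ G / 2 := by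
  have h := abs_lipRetract_sub_le hab (c := c)
    (fun j => abs_gridPoint_gridIndex_sub_le (a := a) hG (x j)) i
  rwa [lipRetract_eq_self hab hc hx] at h

end Grid

section Codes

variable {d : ℕ}

noncomputable def codes (N : ℤ) (K : Fin d → ℤ) :
    Finset (ℤ × ((k : Fin d) → (Fin k → Bool) → ℤ)) :=
  Icc 0 N ×ˢ Fintype.piFinset fun k => Fintype.piFinset fun _ => Icc (-K k) (K k)

theorem card_codes {N : ℤ} (hN : 0 ≤ N) {K : Fin d → ℤ} (hK : ∀ k, 0 ≤ K k) :
    (#(codes N K) : ℤ) = (N + 1) * ∏ k, (2 * K k + 1) ^ 2 ^ (k : ℕ) := by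
  have hK' : ∀ k, max (K k + 1 + K k) 0 = 2 * K k + 1 := fun k => by
    rw [max_eq_left (by linarith [hK k])]; ring
  simp [codes, Int.card_Icc, hK', hN, Int.add_nonneg]

theorem increments_gridIndex_mem_codes {a b G : ℝ} (hG : 0 < G) {D : Fin d → ℝ}
    {x : (Fin d → Bool) → ℝ} (hx : x ∈ DCSset a b d D) :
    increments (fun ω => gridIndex a G (x ω))
      ∈ codes (gridIndex a G b) fun k => ⌊D k / G⌋ + 1 := by
  simp only [codes, increments, mem_product, Fintype.mem_piFinset, mem_Icc, ← abs_le]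
  exact ⟨mem_Icc.mp (gridIndex_mem_Icc hG (hx.1 _)), fun k u => abs_gridIndex_sub_le hG
    (hx.2 k k.isLt _ _ fun j hj => extendWord_apply_of_lt k u true false hj)⟩

variable {δ : ℝ}

theorem floor_div_add_one_le (hδ : 0 < δ) {t : ℝ} (ht : 3 / 4 * δ ≤ t) :
    (⌊t / (3 * δ / 2)⌋ : ℝ) + 1 ≤ 2 * t / δ := by
  have hfloor := Int.floor_le (t / (3 * δ / 2))
  have hscale : t / (3 * δ / 2) = 2 * t / δ / 3 := by field_simp
  have hratio : 3 / 2 ≤ 2 * t / δ := by rw [le_div_iff₀ hδ]; linarith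
  linarith

theorem two_mul_floor_div_add_three_le (hδ : 0 < δ) {t : ℝ} (ht : 9 / 2 * δ ≤ t) :
    2 * ((⌊t / (3 * δ / 2)⌋ : ℝ) + 1) + 1 ≤ 2 * t / δ := by
  have hfloor := Int.floor_le (t / (3 * δ / 2))
  have hscale : t / (3 * δ / 2) = 2 * t / δ / 3 := by field_simp
  have hratio : 9 ≤ 2 * t / δ := by rw [le_div_iff₀ hδ]; linarith
  linarith

theorem card_codes_le {a b : ℝ} {D : Fin d → ℝ} (hδ : 0 < δ) (hL : 3 / 4 * δ ≤ b - a)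
    (hD : ∀ k, 9 / 2 * δ ≤ D k) :
    (#(codes (gridIndex a (3 * δ / 2) b) fun k => ⌊D k / (3 * δ / 2)⌋ + 1) : ℝ)
      ≤ (2 * (b - a) / δ) * ∏ k : Fin d, (2 * D k / δ) ^ (2 ^ (k : ℕ)) := by
  have hK : ∀ k, (0 : ℤ) ≤ ⌊D k / (3 * δ / 2)⌋ :=
    fun k => Int.floor_nonneg.mpr (div_nonneg (by linarith [hD k]) (by positivity))
  have hN : (0 : ℤ) ≤ gridIndex a (3 * δ / 2) b :=
    Int.floor_nonneg.mpr (div_nonneg (by linarith) (by positivity))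
  rw [← Int.cast_natCast, card_codes hN fun k => by linarith [hK k]]
  push_cast
  have hK' : ∀ k, (0 : ℝ) ≤ 2 * (⌊D k / (3 * δ / 2)⌋ + 1) + 1 := fun k => by
    have : (0 : ℝ) ≤ ⌊D k / (3 * δ / 2)⌋ := mod_cast hK k
    linarith
  exact mul_le_mul (floor_div_add_one_le hδ hL)
    (prod_le_prod (fun k _ => pow_nonneg (hK' k) _)
      fun k _ => pow_le_pow_left₀ (hK' k) (two_mul_floor_div_add_three_le hδ (hD k)) _)
    (prod_nonneg fun k _ => pow_nonneg (hK' k) _) (div_nonneg (by linarith) hδ.le)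

end Codes

theorem cov_DCS_le_general
    (a b : ℝ) (d : ℕ) (hd : 0 < d)
    (D : Fin d → ℝ)
    (hDanti : ∀ i j : Fin d, i ≤ j → D j ≤ D i)
    (δ : ℝ) (hδ : 0 < δ)
    (hδD : δ ≤ D ⟨d - 1, Nat.sub_lt hd one_pos⟩ / 10)
    (hδL : δ ≤ (b - a) / 10) :
    (covN (DCSset a b d D) dDCS δ : ℝ≥0∞)
      ≤ ENNReal.ofReal
          ((2 * (b - a) / δ) * ∏ i : Fin d, (2 * D i / δ) ^ (2 ^ (i : ℕ))) := by
  have hab : a ≤ b := by linarith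
  have hD : ∀ k, 10 * δ ≤ D k := fun k => by
    linarith [hDanti k ⟨d - 1, Nat.sub_lt hd one_pos⟩
      (Fin.le_iff_val_le_val.mpr (Nat.le_sub_one_of_lt k.isLt))]
  have hD0 : ∀ k, 0 ≤ D k := fun k => by linarith [hD k]
  set G := 3 * δ / 2 with hG_def
  have hG : 0 < G := by positivity
  have hA := DCSset_eq_lipschitzIcc hDanti hD0 a b
  let center (p : ℤ × ((k : Fin d) → (Fin k → Bool) → ℤ)) : (Fin d → Bool) → ℝ :=
    lipRetract hab (wordDist D) fun ω => gridPoint a G (assemble p ω)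
  have hcov : covN (DCSset a b d D) dDCS δ
      ≤ #(codes (gridIndex a G b) fun k => ⌊D k / G⌋ + 1) := by
    refine covN_le_card _ center (fun p _ => hA ▸ lipRetract_mem hab (wordDist_nonneg hD0)
      wordDist_self (wordDist_le_add hD0) _) fun x hx =>
        ⟨_, increments_gridIndex_mem_codes hG hx, (sup'_lt_iff _).mpr fun ω _ => ?_⟩
    have hclose := abs_lipRetract_gridPoint_sub_le hab hG wordDist_self (hA ▸ hx) ω
    simp only [center, assemble_increments]
    linarith
  have hcard := card_codes_le (a := a) (b := b) (D := D) hδ (by linarith)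
    fun k => by linarith [hD k]
  calc (covN (DCSset a b d D) dDCS δ : ℝ≥0∞)
      ≤ (#(codes (gridIndex a G b) fun k => ⌊D k / G⌋ + 1) : ℝ≥0∞) := by
        simpa using ENat.toENNReal_le.mpr hcov
    _ ≤ _ := by
        rw [← ENNReal.ofReal_natCast]
        exact ENNReal.ofReal_le_ofReal hcard

/-- **Bounding the number of discrete Cantor sets.** -/
theorem cov_DCS_le
    (a b : ℝ) (hab : a ≤ b) (d : ℕ) (hd : 0 < d)
    (D : Fin d → ℝ) (hDpos : ∀ i, 0 < D i)
    (hDanti : ∀ i j : Fin d, i ≤ j → D j ≤ D i)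
    (δ : ℝ) (hδ : 0 < δ)
    (hδD : δ ≤ D ⟨d - 1, Nat.sub_lt hd one_pos⟩ / 10)
    (hδL : δ ≤ (b - a) / 10) :
    (covN (DCSset a b d D) dDCS δ : ℝ≥0∞)
      ≤ ENNReal.ofReal
          ((2 * (b - a) / δ) * ∏ i : Fin d, (2 * D i / δ) ^ (2 ^ (i : ℕ))) :=
  cov_DCS_le_general a b d hd D hDanti δ hδ hδD hδL
end
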